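/- arXiv:1505.04929 — 9 statements merged into one kernel-verified Lean document; each statement's English description precedes it below -/
import Mathlib

section
/- For all natural numbers m ≥ 1 and n ≥ 1, the identity ∑_{j=0}^{n-1} 2^{m-j} · C(m+j-1, j) · (m-j) = n · 2^{m-n+1} · C(m+n-1, n) holds. -/
/-! The summand is a forward difference: with `F j = j · 2^(m-j+1) · C(m+j-1, j)`, the identity
`(j+1) · C(m+j, j+1) = (m+j) · C(m+j-1, j)` gives `F (j+1) - F j = 2^(m-j) · C(m+j-1, j) · (m-j)`,
so the sum telescopes to `F n - F 0 = F n`. -/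

lemma add_one_mul_choose_add_add_one (m j : ℕ) :
    (j + 1) * (m + j).choose (j + 1) = (m + j) * (m + j - 1).choose j := by
  rcases Nat.eq_zero_or_pos (m + j) with h | h
  · simp [h]
  · obtain ⟨k, hk⟩ := Nat.exists_eq_add_of_lt h
    rw [hk, zero_add, Nat.add_sub_cancel, Nat.add_one_mul_choose_eq, mul_comm]

lemma two_zpow_mul_choose_mul_sub_eq_sub (m j : ℕ) :
    (2 : ℚ) ^ ((m : ℤ) - j) * ((m + j - 1).choose j : ℚ) * ((m : ℚ) - j) =
      ((j + 1 : ℕ) : ℚ) * 2 ^ ((m : ℤ) - (j + 1 : ℕ) + 1) * ((m + (j + 1) - 1).choose (j + 1) : ℚ) -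
        (j : ℚ) * 2 ^ ((m : ℤ) - j + 1) * ((m + j - 1).choose j : ℚ) := by
  have hchoose : ((j : ℚ) + 1) * ((m + j).choose (j + 1) : ℚ) =
      ((m : ℚ) + j) * ((m + j - 1).choose j : ℚ) :=
    mod_cast add_one_mul_choose_add_add_one m j
  have hpow : (2 : ℚ) ^ ((m : ℤ) - j + 1) = 2 * 2 ^ ((m : ℤ) - j) := by
    rw [zpow_add_one₀ two_ne_zero, mul_comm]
  rw [show m + (j + 1) - 1 = m + j by omega, hpow]
  push_cast
  rw [show (m : ℤ) - (j + 1) + 1 = m - j by ring]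
  linear_combination -(2 : ℚ) ^ ((m : ℤ) - j) * hchoose

theorem stmt1_general (m n : ℕ) :
    ∑ j ∈ Finset.range n,
      (2 : ℚ) ^ ((m : ℤ) - (j : ℤ)) * (Nat.choose (m + j - 1) j : ℚ) * ((m : ℚ) - (j : ℚ)) =
    (n : ℚ) * (2 : ℚ) ^ ((m : ℤ) - (n : ℤ) + 1) * (Nat.choose (m + n - 1) n : ℚ) := by
  simp only [two_zpow_mul_choose_mul_sub_eq_sub]
  rw [Finset.sum_range_sub (fun j : ℕ =>
    (j : ℚ) * 2 ^ ((m : ℤ) - j + 1) * ((m + j - 1).choose j : ℚ))]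
  simp

theorem stmt1 (m n : ℕ) (hm : 1 ≤ m) (hn : 1 ≤ n) :
    ∑ j ∈ Finset.range n,
      (2 : ℚ) ^ ((m : ℤ) - (j : ℤ)) * (Nat.choose (m + j - 1) j : ℚ) * ((m : ℚ) - (j : ℚ)) =
    (n : ℚ) * (2 : ℚ) ^ ((m : ℤ) - (n : ℤ) + 1) * (Nat.choose (m + n - 1) n : ℚ) :=
  stmt1_general m n
end

section
/- For all n ≥ 1, ∑_{j=0}^{n-1} 2^{n-j} · C(n+j-1, j) · (n-j) = n · C(2n, n). -/
/-!
The partial sums up to any `m ≤ n` have the closed form `n · 2^(n-m) · C(n+m, m)`, as one checks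
inductively with Pascal's rule and absorption. At `m = n` the extra summand `j = n` vanishes and
`2^0 · C(2n, n)` is the right-hand side.
-/

open Finset

theorem sum_range_succ_two_pow_mul_choose_mul_sub (n : ℕ) :
    ∀ m ≤ n, ∑ j ∈ range (m + 1), 2 ^ (n - j) * (n + j - 1).choose j * (n - j) =
      n * 2 ^ (n - m) * (n + m).choose m
  | 0, _ => by simp [mul_comm]
  | m + 1, hm => by
    obtain ⟨k, rfl⟩ : ∃ k, n = m + 1 + k := ⟨n - (m + 1), by omega⟩
    have pascal : (m + 1 + k + m + 1).choose (m + 1) =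
        (m + 1 + k + m).choose m + (m + 1 + k + m).choose (m + 1) :=
      Nat.choose_succ_succ _ _
    have absorb : (m + 1 + k + m).choose (m + 1) * (m + 1) =
        (m + 1 + k + m).choose m * (m + 1 + k) := by
      simpa using Nat.choose_succ_right_eq (m + 1 + k + m) m
    rw [sum_range_succ, sum_range_succ_two_pow_mul_choose_mul_sub _ m (by omega),
      show m + 1 + k - m = k + 1 by omega, show m + 1 + k - (m + 1) = k by omega,
      show m + 1 + k + (m + 1) - 1 = m + 1 + k + m by omega,
      show m + 1 + k + (m + 1) = m + 1 + k + m + 1 by omega, pascal, pow_succ]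
    linear_combination 2 ^ k * absorb.symm

theorem stmt2_general (n : ℕ) :
    ∑ j ∈ Finset.range n, 2 ^ (n - j) * Nat.choose (n + j - 1) j * (n - j) =
      n * Nat.choose (2 * n) n := by
  have h := sum_range_succ_two_pow_mul_choose_mul_sub n n le_rfl
  rwa [sum_range_succ, Nat.sub_self, mul_zero, add_zero, pow_zero, mul_one,
    ← two_mul] at h

theorem stmt2 (n : ℕ) (hn : 1 ≤ n) :
    ∑ j ∈ Finset.range n, 2 ^ (n - j) * Nat.choose (n + j - 1) j * (n - j) =
      n * Nat.choose (2 * n) n :=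
  stmt2_general n
end

section
/- For 1 ≤ i ≤ n, the number of weakly increasing integer sequences (w_1, ..., w_{n-i}) with 2 ≤ w_j ≤ j + i for all j equals C(2n-i-1, n-1) · i / n (equivalently C(2n-i-1, n-1) - C(2n-i-1, n)). -/
def S (m c : ℕ) : Type := {a : Fin m → ℕ // (∀ j, a j ≤ (j : ℕ) + c) ∧ Monotone a}

def equivB (m : ℕ) : S (m+1) 0 ≃ S m 1 where
  toFun a := ⟨fun j => a.1 j.succ,
    fun j => by have := a.2.1 j.succ; simpa using this,
    fun j k h => a.2.2 (Fin.succ_le_succ_iff.mpr h)⟩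
  invFun b := ⟨Fin.cases 0 b.1,
    by
      intro j
      induction j using Fin.cases with
      | zero => simp
      | succ j => have := b.2.1 j; simp; omega,
    by
      intro j k hjk
      induction j using Fin.cases with
      | zero => simp
      | succ j =>
        induction k using Fin.cases with
        | zero => exact absurd hjk (by simp [Fin.le_zero_iff, Fin.succ_ne_zero])
        | succ k =>
          simp only [Fin.cases_succ]
          exact b.2.2 (Fin.succ_le_succ_iff.mp hjk)⟩
  left_inv a := by
    apply Subtype.ext
    funext j
    induction j using Fin.cases with
    | zero =>
      have := a.2.1 0
      simp at this ⊢
      omega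
    | succ j => simp
  right_inv b := by
    apply Subtype.ext
    funext j
    simp

def equivC (m c : ℕ) : S (m+1) (c+1) ≃ S (m+1) c ⊕ S m (c+2) where
  toFun a :=
    if h : a.1 0 = 0 then
      Sum.inr ⟨fun j => a.1 j.succ,
        fun j => by have := a.2.1 j.succ; simp at this ⊢; omega,
        fun j k hk => a.2.2 (Fin.succ_le_succ_iff.mpr hk)⟩
    else
      Sum.inl ⟨fun j => a.1 j - 1,
        fun j => by show a.1 j - 1 ≤ (j:ℕ) + c; have := a.2.1 j; omega,
        fun j k hk => Nat.sub_le_sub_right (a.2.2 hk) 1⟩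
  invFun x :=
    match x with
    | Sum.inl b => ⟨fun j => b.1 j + 1,
        fun j => by show b.1 j + 1 ≤ (j:ℕ) + (c+1); have := b.2.1 j; omega,
        fun j k hk => by show b.1 j + 1 ≤ b.1 k + 1; have := b.2.2 hk; omega⟩
    | Sum.inr b => ⟨Fin.cases 0 b.1,
        by
          intro j
          induction j using Fin.cases with
          | zero => simp
          | succ j => have := b.2.1 j; simp; omega,
        by
          intro j k hjk
          induction j using Fin.cases with
          | zero => simp
          | succ j =>
            induction k using Fin.cases with
            | zero => exact absurd hjk (by simp [Fin.le_zero_iff, Fin.succ_ne_zero])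
            | succ k =>
              simp only [Fin.cases_succ]
              exact b.2.2 (Fin.succ_le_succ_iff.mp hjk)⟩
  left_inv a := by
    by_cases h : a.1 0 = 0
    · simp only [h, dif_pos]
      apply Subtype.ext
      funext j
      induction j using Fin.cases with
      | zero => simpa using h.symm
      | succ j => simp
    · simp only [h, dif_neg]
      apply Subtype.ext
      funext j
      have h0 : 1 ≤ a.1 0 := Nat.one_le_iff_ne_zero.mpr h
      have hj : 1 ≤ a.1 j := le_trans h0 (a.2.2 (Fin.zero_le j))
      show a.1 j - 1 + 1 = a.1 j
      omega
  right_inv x := by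
    match x with
    | Sum.inl b =>
      simp only [dif_neg (by omega : ¬ b.1 0 + 1 = 0)]
      exact congrArg Sum.inl (Subtype.ext (funext fun j => by
        show b.1 j + 1 - 1 = b.1 j; omega))
    | Sum.inr b =>
      have h0 : (Fin.cases 0 b.1 : Fin (m+1) → ℕ) 0 = 0 := by simp
      simp only [h0, dif_pos]
      exact congrArg Sum.inr (Subtype.ext (funext fun j => by
        show (Fin.cases 0 b.1 : Fin (m+1) → ℕ) j.succ = b.1 j; simp))

instance Sfin (m c : ℕ) : Finite (S m c) := by
  unfold S
  apply Finite.of_injective (β := Fin m → Fin (m + c + 1))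
    (fun a => fun j => ⟨a.1 j, by have h := a.2.1 j; have := j.isLt; omega⟩)
  intro a b hab
  ext j
  exact congrArg Fin.val (congrFun hab j)


lemma card_S_zero (c : ℕ) : Nat.card (S 0 c) = 1 := by
  have : Unique (S 0 c) := {
    default := ⟨fun j => j.elim0, fun j => j.elim0, fun j => j.elim0⟩
    uniq := fun a => Subtype.ext (funext fun j => j.elim0) }
  simp [Nat.card_unique]

lemma key : ∀ m c, Nat.card (S m c) + (2*m+c).choose (m+c+1) = (2*m+c).choose (m+c) := by
  intro m
  induction m with
  | zero =>
    intro c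
    rw [card_S_zero]
    simp [Nat.choose_eq_zero_of_lt (lt_add_one c), Nat.choose_self]
  | succ m ihm =>
    intro c
    induction c with
    | zero =>
      rw [Nat.card_congr (equivB m)]
      have h1 := ihm 1
      have e1 : 2 * (m+1) + 0 = (2*m+1) + 1 := by ring
      have e2 : (m+1) + 0 + 1 = (m+1) + 1 := by ring
      have e3 : (m+1) + 0 = m + 1 := by ring
      rw [e1, e2, e3]
      have p1 : ((2*m+1)+1).choose ((m+1)+1) = (2*m+1).choose (m+1) + (2*m+1).choose (m+1+1) :=
        Nat.choose_succ_succ _ _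
      have p2 : ((2*m+1)+1).choose (m+1) = (2*m+1).choose m + (2*m+1).choose (m+1) :=
        Nat.choose_succ_succ _ _
      have p3 : (2*m+1).choose m = (2*m+1).choose (m+1) := by
        rw [← Nat.choose_symm (show m+1 ≤ 2*m+1 by omega)]
        congr 1
        omega
      have e4 : 2*m+1 = (m+1)+1 + m - 1 := by omega
      omega
    | succ c ihc =>
      rw [Nat.card_congr (equivC m c), Nat.card_sum]
      have h1 := ihc
      have h2 := ihm (c+2)
      have e1 : 2 * (m+1) + (c+1) = (2*(m+1)+c) + 1 := by ring
      have e2 : (m+1) + (c+1) + 1 = ((m+1)+c+1) + 1 := by ring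
      have e3 : (m+1) + (c+1) = ((m+1)+c) + 1 := by ring
      have e4 : 2*m+(c+2) = 2*(m+1)+c := by ring
      have e5 : m+(c+2)+1 = (m+1)+c+1+1 := by omega
      have e6 : m+(c+2) = (m+1)+c+1 := by omega
      rw [e1, e2, e3]
      rw [e4, e5, e6] at h2
      have p1 : ((2*(m+1)+c)+1).choose (((m+1)+c+1)+1)
          = (2*(m+1)+c).choose ((m+1)+c+1) + (2*(m+1)+c).choose ((m+1)+c+1+1) :=
        Nat.choose_succ_succ _ _
      have p2 : ((2*(m+1)+c)+1).choose (((m+1)+c)+1)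
          = (2*(m+1)+c).choose ((m+1)+c) + (2*(m+1)+c).choose ((m+1)+c+1) :=
        Nat.choose_succ_succ _ _
      omega


theorem stmt5 (n i : ℕ) (h1 : 1 ≤ i) (h2 : i ≤ n) :
    n * Nat.card {w : Fin (n - i) → ℕ //
        (∀ j, 2 ≤ w j ∧ w j ≤ (j : ℕ) + 1 + i) ∧ Monotone w} =
      Nat.choose (2 * n - i - 1) (n - 1) * i ∧
    Nat.card {w : Fin (n - i) → ℕ //
        (∀ j, 2 ≤ w j ∧ w j ≤ (j : ℕ) + 1 + i) ∧ Monotone w} =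
      Nat.choose (2 * n - i - 1) (n - 1) - Nat.choose (2 * n - i - 1) n := by
  have e : {w : Fin (n - i) → ℕ //
      (∀ j, 2 ≤ w j ∧ w j ≤ (j : ℕ) + 1 + i) ∧ Monotone w} ≃ S (n-i) (i-1) :=
    { toFun := fun w => ⟨fun j => w.1 j - 2,
        fun j => by
          show w.1 j - 2 ≤ (j:ℕ) + (i-1)
          have := (w.2.1 j).2; have := (w.2.1 j).1; omega,
        fun j k hk => Nat.sub_le_sub_right (w.2.2 hk) 2⟩
      invFun := fun a => ⟨fun j => a.1 j + 2,
        ⟨fun j => ⟨by show 2 ≤ a.1 j + 2; omega,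
          by show a.1 j + 2 ≤ (j:ℕ) + 1 + i; have := a.2.1 j; omega⟩,
         fun j k hk => by show a.1 j + 2 ≤ a.1 k + 2; have := a.2.2 hk; omega⟩⟩
      left_inv := fun w => Subtype.ext (funext fun j => by
        have := (w.2.1 j).1
        show w.1 j - 2 + 2 = w.1 j
        omega)
      right_inv := fun a => Subtype.ext (funext fun j => by
        show a.1 j + 2 - 2 = a.1 j
        omega) }
  have hcard : Nat.card {w : Fin (n - i) → ℕ //
      (∀ j, 2 ≤ w j ∧ w j ≤ (j : ℕ) + 1 + i) ∧ Monotone w}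
      = Nat.card (S (n-i) (i-1)) := Nat.card_congr e
  rw [hcard]
  clear hcard e
  have hk := key (n-i) (i-1)
  have e7 : 2*(n-i)+(i-1) = 2*n-i-1 := by omega
  have e8 : (n-i)+(i-1) = n-1 := by omega
  have e9 : (n-i)+(i-1)+1 = n := by omega
  rw [e7] at hk
  rw [e9] at hk
  rw [e8] at hk
  have hq := Nat.choose_succ_right_eq (2*n-i-1) (n-1)
  rw [show n-1+1 = n by omega, show 2*n-i-1-(n-1) = n-i by omega] at hq
  constructor
  · have hc' : ((Nat.card (S (n-i) (i-1)) : ℤ)) + ((2*n-i-1).choose n : ℤ)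
        = ((2*n-i-1).choose (n-1) : ℤ) := by exact_mod_cast hk
    have hb' : ((2*n-i-1).choose n : ℤ) * n
        = ((2*n-i-1).choose (n-1) : ℤ) * ((n:ℤ) - i) := by
      have h3 := hq
      zify [h2] at h3
      linarith
    have : ((n:ℤ)) * (Nat.card (S (n-i) (i-1)))
        = ((2*n-i-1).choose (n-1) : ℤ) * i := by
      linear_combination (n:ℤ) * hc' - hb'
    exact_mod_cast this
  · omega
end

section
/- For every n ≥ 1, the number of words w_1 w_2 ... w_n over the alphabet {B, E} ∪ {2, 3, ...} satisfying (1) w_i ∈ {B, E} or 2 ≤ w_i ≤ i, (2) if w_i is an integer then w_{i+1} is an integer, and (3) if w_i is an integer then w_{i+1} ≥ w_i, equals the central binomial coefficient C(2n, n). -/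
/-- The alphabet for code words: `Sum.inl true` is the letter `B`, `Sum.inl false` is the
letter `E`, and `Sum.inr k` is the integer letter `k`. -/
abbrev Letter := Bool ⊕ ℕ

/-- `w` is a code word if: every integer letter at (1-based) position `i` satisfies
`2 ≤ k ≤ i`; an integer letter is always followed by an integer letter; and consecutive
integer letters are weakly increasing. -/
def IsCodeWord {n : ℕ} (w : Fin n → Letter) : Prop :=
  (∀ i : Fin n, ∀ k : ℕ, w i = Sum.inr k → 2 ≤ k ∧ k ≤ (i : ℕ) + 1) ∧
  (∀ i j : Fin n, (j : ℕ) = (i : ℕ) + 1 → ∀ k : ℕ, w i = Sum.inr k →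
    ∃ l : ℕ, w j = Sum.inr l ∧ k ≤ l)

/-- Integer words: nondecreasing, bounded `v i ≤ i+1+s`, starting at least `k`. -/
def Vsub (n s k : ℕ) : Type :=
  {v : Fin n → ℕ // (∀ i : Fin n, v i ≤ (i : ℕ) + 1 + s) ∧
    (∀ i j : Fin n, (j : ℕ) = (i : ℕ) + 1 → v i ≤ v j) ∧
    (∀ h : 0 < n, k ≤ v ⟨0, h⟩)}

/-- Code words with slack `s` in the bound. -/
def Wsub (n s : ℕ) : Type :=
  {w : Fin n → Letter // (∀ i : Fin n, ∀ m : ℕ, w i = Sum.inr m → 2 ≤ m ∧ m ≤ (i : ℕ) + 1 + s) ∧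
    (∀ i j : Fin n, (j : ℕ) = (i : ℕ) + 1 → ∀ m : ℕ, w i = Sum.inr m →
      ∃ l : ℕ, w j = Sum.inr l ∧ m ≤ l)}

lemma cons_mk_zero {α : Type*} {n : ℕ} (x : α) (p : Fin n → α) (h : 0 < n + 1) :
    (Fin.cons x p : Fin (n + 1) → α) ⟨0, h⟩ = x := rfl

lemma cons_mk_succ {α : Type*} {n : ℕ} (x : α) (p : Fin n → α) (m : ℕ) (h : m + 1 < n + 1) :
    (Fin.cons x p : Fin (n + 1) → α) ⟨m + 1, h⟩ = p ⟨m, Nat.lt_of_succ_lt_succ h⟩ := rfl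

lemma tail_mk {α : Type*} {n : ℕ} (p : Fin (n + 1) → α) (i : Fin n) :
    Fin.tail p i = p ⟨(i : ℕ) + 1, Nat.succ_lt_succ i.isLt⟩ := rfl

/-- every value of a `Vsub` element is at least `k`. -/
lemma vge {n s k : ℕ} (v : Vsub n s k) (i : Fin n) : k ≤ v.1 i := by
  obtain ⟨iv, hi⟩ := i
  induction iv with
  | zero => exact v.2.2.2 (by omega)
  | succ m ih =>
    have hm : m < n := by omega
    exact le_trans (ih hm) (v.2.2.1 ⟨m, hm⟩ ⟨m + 1, hi⟩ rfl)

/-- if a code word starts with an integer, all its letters are integers. -/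
lemma wAllInt {n s : ℕ} (w : Wsub (n + 1) s) (m : ℕ)
    (h : w.1 ⟨0, Nat.succ_pos n⟩ = Sum.inr m) (i : Fin (n + 1)) :
    ∃ l : ℕ, w.1 i = Sum.inr l := by
  obtain ⟨iv, hi⟩ := i
  induction iv with
  | zero => exact ⟨m, h⟩
  | succ q ih =>
    have hq : q < n + 1 := by omega
    obtain ⟨l, hl⟩ := ih hq
    obtain ⟨l', hl', _⟩ := w.2.2 ⟨q, hq⟩ ⟨q + 1, hi⟩ rfl l hl
    exact ⟨l', hl'⟩

instance vFinite (n s k : ℕ) : Finite (Vsub n s k) := by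
  refine Finite.of_injective
    (fun v => (fun i => (⟨v.1 i, by have h1 := v.2.1 i; have h2 := i.isLt; omega⟩ :
      Fin (n + s + 1)) : Fin n → Fin (n + s + 1))) ?_
  intro a b h
  apply Subtype.ext
  funext i
  simpa using congrArg Fin.val (congrFun h i)

instance wFinite (n s : ℕ) : Finite (Wsub n s) := by
  refine Finite.of_injective
    (fun w => (fun i => Sum.map id (fun m => (⟨min m (n + s), by omega⟩ : Fin (n + s + 1)))
      (w.1 i) : Fin n → Bool ⊕ Fin (n + s + 1))) ?_
  intro a b h
  apply Subtype.ext
  funext i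
  have hi := congrFun h i
  dsimp only at hi
  rcases ha : a.1 i with b1 | m1 <;> rcases hb : b.1 i with b2 | m2 <;>
    rw [ha, hb] at hi <;> simp at hi
  · rw [hi]
  · have h1 := (a.2.1 i m1 ha).2
    have h2 := (b.2.1 i m2 hb).2
    have h3 := i.isLt
    have : m1 = m2 := by omega
    rw [this]

instance vUnique (s k : ℕ) : Unique (Vsub 0 s k) where
  default := ⟨fun i => i.elim0, fun i => i.elim0, fun i => i.elim0, fun h => absurd h (by omega)⟩
  uniq := fun a => Subtype.ext (funext fun i => i.elim0)

instance wUnique (s : ℕ) : Unique (Wsub 0 s) where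
  default := ⟨fun i => i.elim0, fun i => i.elim0, fun i => i.elim0⟩
  uniq := fun a => Subtype.ext (funext fun i => i.elim0)

instance vEmpty (n s : ℕ) : IsEmpty (Vsub (n + 1) s (s + 2)) := by
  refine ⟨fun v => ?_⟩
  have h1 := v.2.1 ⟨0, Nat.succ_pos n⟩
  have h2 := v.2.2.2 (Nat.succ_pos n)
  simp only [Fin.val_mk] at h1
  omega

/-- The bijection underlying `Vsub (n+1) s k ≃ Vsub n (s+1) k ⊕ Vsub (n+1) s (k+1)`. -/
def gV (n s k : ℕ) (hk : k ≤ s + 1) :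
    Vsub n (s + 1) k ⊕ Vsub (n + 1) s (k + 1) → Vsub (n + 1) s k
  | .inl u => ⟨Fin.cons k u.1, by
      refine ⟨?_, ?_, ?_⟩
      · intro i
        obtain ⟨iv, hi⟩ := i
        match iv, hi with
        | 0, hi => simpa [cons_mk_zero] using by omega
        | m + 1, hi =>
          rw [cons_mk_succ]
          have := u.2.1 ⟨m, Nat.lt_of_succ_lt_succ hi⟩
          simp only [Fin.val_mk] at this ⊢
          omega
      · intro i j hij
        obtain ⟨iv, hi⟩ := i
        obtain ⟨jv, hj⟩ := j
        simp only [Fin.val_mk] at hij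
        subst hij
        match iv, hi, hj with
        | 0, hi, hj =>
          rw [cons_mk_zero, cons_mk_succ]
          exact u.2.2.2 (Nat.lt_of_succ_lt_succ hj)
        | m + 1, hi, hj =>
          rw [cons_mk_succ, cons_mk_succ]
          exact u.2.2.1 _ _ rfl
      · intro _
        rw [cons_mk_zero]⟩
  | .inr u => ⟨u.1, u.2.1, u.2.2.1, fun h => le_trans (Nat.le_succ k) (u.2.2.2 h)⟩

lemma gV_bijective (n s k : ℕ) (hk : k ≤ s + 1) : Function.Bijective (gV n s k hk) := by
  constructor
  · intro x y hxy
    have hval := congrArg Subtype.val hxy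
    match x, y with
    | .inl a, .inl b =>
      simp only [gV] at hval
      congr 1
      apply Subtype.ext
      funext i
      have := congrFun hval i.succ
      simpa [Fin.cons_succ] using this
    | .inl a, .inr b =>
      exfalso
      simp only [gV] at hval
      have h0 := congrFun hval ⟨0, Nat.succ_pos n⟩
      rw [cons_mk_zero] at h0
      have := b.2.2.2 (Nat.succ_pos n)
      omega
    | .inr a, .inl b =>
      exfalso
      simp only [gV] at hval
      have h0 := congrFun hval ⟨0, Nat.succ_pos n⟩
      rw [cons_mk_zero] at h0
      have := a.2.2.2 (Nat.succ_pos n)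
      omega
    | .inr a, .inr b =>
      simp only [gV] at hval
      congr 1
      exact Subtype.ext hval
  · intro v
    by_cases h : v.1 ⟨0, Nat.succ_pos n⟩ = k
    · refine ⟨.inl ⟨Fin.tail v.1, ?_, ?_, ?_⟩, ?_⟩
      · intro i
        rw [tail_mk]
        have := v.2.1 ⟨(i : ℕ) + 1, Nat.succ_lt_succ i.isLt⟩
        simp only [Fin.val_mk] at this
        omega
      · intro i j hij
        rw [tail_mk, tail_mk]
        exact v.2.2.1 _ _ (by simp only [Fin.val_mk]; omega)
      · intro hn
        have hadj := v.2.2.1 ⟨0, Nat.succ_pos n⟩ ⟨1, by omega⟩ rfl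
        rw [tail_mk]
        simp only [Fin.val_mk, Nat.zero_add]
        omega
      · apply Subtype.ext
        simp only [gV]
        have h0 : v.1 0 = k := by rw [← Fin.mk_zero]; exact h
        have hct := Fin.cons_self_tail (α := fun _ => ℕ) v.1
        rw [h0] at hct
        exact hct
    · have hge := v.2.2.2 (Nat.succ_pos n)
      refine ⟨.inr ⟨v.1, v.2.1, v.2.2.1, fun _ => by omega⟩, ?_⟩
      apply Subtype.ext
      rfl

/-- The bijection underlying `Wsub (n+1) s ≃ (Bool × Wsub n (s+1)) ⊕ Vsub (n+1) s 2`. -/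
def gW (n s : ℕ) : (Bool × Wsub n (s + 1)) ⊕ Vsub (n + 1) s 2 → Wsub (n + 1) s
  | .inl (b, w) => ⟨Fin.cons (Sum.inl b) w.1, by
      refine ⟨?_, ?_⟩
      · intro i m him
        obtain ⟨iv, hi⟩ := i
        match iv, hi with
        | 0, hi => rw [cons_mk_zero] at him; exact absurd him (by simp)
        | q + 1, hi =>
          rw [cons_mk_succ] at him
          have := w.2.1 _ _ him
          simp only [Fin.val_mk] at this ⊢
          omega
      · intro i j hij m him
        obtain ⟨iv, hi⟩ := i
        obtain ⟨jv, hj⟩ := j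
        simp only [Fin.val_mk] at hij
        subst hij
        match iv, hi, hj with
        | 0, hi, hj => rw [cons_mk_zero] at him; exact absurd him (by simp)
        | q + 1, hi, hj =>
          rw [cons_mk_succ] at him
          obtain ⟨l, hl, hle⟩ := w.2.2 ⟨q, by omega⟩ ⟨q + 1, by omega⟩ rfl m him
          exact ⟨l, by rw [cons_mk_succ]; exact hl, hle⟩⟩
  | .inr v => ⟨fun i => Sum.inr (v.1 i), by
      refine ⟨?_, ?_⟩
      · intro i m him
        simp only [Sum.inr.injEq] at him
        subst him
        exact ⟨vge v i, v.2.1 i⟩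
      · intro i j hij m him
        simp only [Sum.inr.injEq] at him
        subst him
        exact ⟨v.1 j, rfl, v.2.2.1 i j hij⟩⟩

lemma gW_bijective (n s : ℕ) : Function.Bijective (gW n s) := by
  constructor
  · intro x y hxy
    have hval := congrArg Subtype.val hxy
    match x, y with
    | .inl (b1, w1), .inl (b2, w2) =>
      simp only [gW] at hval
      have h0 := congrFun hval ⟨0, Nat.succ_pos n⟩
      rw [cons_mk_zero, cons_mk_zero] at h0
      simp only [Sum.inl.injEq] at h0
      subst h0
      congr 2
      apply Subtype.ext
      funext i
      have := congrFun hval i.succ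
      simpa [Fin.cons_succ] using this
    | .inl (b1, w1), .inr v =>
      exfalso
      simp only [gW] at hval
      have h0 := congrFun hval ⟨0, Nat.succ_pos n⟩
      rw [cons_mk_zero] at h0
      exact absurd h0 (by simp)
    | .inr v, .inl (b2, w2) =>
      exfalso
      simp only [gW] at hval
      have h0 := congrFun hval ⟨0, Nat.succ_pos n⟩
      rw [cons_mk_zero] at h0
      exact absurd h0 (by simp)
    | .inr v1, .inr v2 =>
      simp only [gW] at hval
      congr 1
      apply Subtype.ext
      funext i
      have := congrFun hval i
      simpa using this
  · intro w
    rcases h : w.1 ⟨0, Nat.succ_pos n⟩ with b | m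
    · refine ⟨.inl (b, ⟨Fin.tail w.1, ?_, ?_⟩), ?_⟩
      · intro i m him
        rw [tail_mk] at him
        have := w.2.1 _ _ him
        simp only [Fin.val_mk] at this
        omega
      · intro i j hij m him
        rw [tail_mk] at him
        rw [tail_mk]
        exact w.2.2 _ _ (by simp only [Fin.val_mk]; omega) m him
      · apply Subtype.ext
        simp only [gW]
        have : Fin.cons (w.1 ⟨0, Nat.succ_pos n⟩) (Fin.tail w.1) = w.1 :=
          Fin.cons_self_tail w.1
        rw [h] at this
        exact this
    · have hall := wAllInt w m h
      set v : Fin (n + 1) → ℕ := fun i => (w.1 i).elim (fun _ => 0) id with hv_def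
      have hv : ∀ i, w.1 i = Sum.inr (v i) := by
        intro i
        obtain ⟨l, hl⟩ := hall i
        rw [hl]
        simp [hv_def, hl]
      refine ⟨.inr ⟨v, ?_, ?_, ?_⟩, ?_⟩
      · intro i
        exact (w.2.1 i (v i) (hv i)).2
      · intro i j hij
        obtain ⟨l, hl, hle⟩ := w.2.2 i j hij (v i) (hv i)
        have : v j = l := by
          have := (hv j).symm.trans hl
          simpa using this
        omega
      · intro hn
        have h2 : 2 ≤ m := (w.2.1 _ m h).1
        have : v ⟨0, hn⟩ = m := by
          have := (hv ⟨0, hn⟩).symm.trans h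
          simpa using this
        omega
      · apply Subtype.ext
        funext i
        exact (hv i).symm

lemma cV_zero (s k : ℕ) : Nat.card (Vsub 0 s k) = 1 := Nat.card_unique

lemma cW_zero (s : ℕ) : Nat.card (Wsub 0 s) = 1 := Nat.card_unique

lemma cV_top (n s : ℕ) : Nat.card (Vsub (n + 1) s (s + 2)) = 0 := Nat.card_of_isEmpty

lemma cV_rec (n s k : ℕ) (hk : k ≤ s + 1) :
    Nat.card (Vsub (n + 1) s k) =
      Nat.card (Vsub n (s + 1) k) + Nat.card (Vsub (n + 1) s (k + 1)) := by
  rw [← Nat.card_sum]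
  exact (Nat.card_eq_of_bijective _ (gV_bijective n s k hk)).symm

lemma cW_rec (n s : ℕ) :
    Nat.card (Wsub (n + 1) s) =
      2 * Nat.card (Wsub n (s + 1)) + Nat.card (Vsub (n + 1) s 2) := by
  rw [← Nat.card_eq_of_bijective _ (gW_bijective n s), Nat.card_sum, Nat.card_prod]
  simp [Nat.card_eq_fintype_card]

lemma vcard (n : ℕ) : ∀ t s k : ℕ, k + t = s + 2 →
    Nat.card (Vsub (n + 1) s k) + Nat.choose (2 * n + 1 + t) n =
      Nat.choose (2 * n + 1 + t) (n + 1) := by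
  induction n with
  | zero =>
    intro t
    induction t with
    | zero =>
      intro s k hk
      have hks : k = s + 2 := by omega
      subst hks
      rw [cV_top]
      simp
    | succ t iht =>
      intro s k hk
      rw [cV_rec 0 s k (by omega), cV_zero]
      have h1 := iht s (k + 1) (by omega)
      simp only [Nat.mul_zero, Nat.zero_add, Nat.choose_zero_right, Nat.choose_one_right]
        at h1 ⊢
      omega
  | succ n ihn =>
    intro t
    induction t with
    | zero =>
      intro s k hk
      have hks : k = s + 2 := by omega
      subst hks
      rw [cV_top]
      have hsym := Nat.choose_symm (show n + 1 + 1 ≤ 2 * (n + 1) + 1 + 0 by omega)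
        (n := 2 * (n + 1) + 1 + 0)
      rw [show 2 * (n + 1) + 1 + 0 - (n + 1 + 1) = n + 1 by omega] at hsym
      omega
    | succ t iht =>
      intro s k hk
      rw [cV_rec (n + 1) s k (by omega)]
      have h1 := ihn (t + 2) (s + 1) k (by omega)
      have h2 := iht s (k + 1) (by omega)
      rw [show 2 * n + 1 + (t + 2) = 2 * n + t + 3 by ring] at h1
      rw [show 2 * (n + 1) + 1 + t = 2 * n + t + 3 by ring] at h2
      rw [show 2 * (n + 1) + 1 + (t + 1) = 2 * n + t + 4 by ring]
      rw [show n + 1 + 1 = n + 2 by omega] at h2 ⊢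
      have p1 : Nat.choose (2 * n + t + 4) (n + 1) =
          Nat.choose (2 * n + t + 3) n + Nat.choose (2 * n + t + 3) (n + 1) :=
        Nat.choose_succ_succ (2 * n + t + 3) n
      have p2 : Nat.choose (2 * n + t + 4) (n + 2) =
          Nat.choose (2 * n + t + 3) (n + 1) + Nat.choose (2 * n + t + 3) (n + 2) :=
        Nat.choose_succ_succ (2 * n + t + 3) (n + 1)
      omega

lemma wcard : ∀ n s : ℕ, Nat.card (Wsub n s) = Nat.choose (2 * n + s) n := by
  intro n
  induction n with
  | zero => intro s; rw [cW_zero]; simp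
  | succ n ihn =>
    intro s
    rw [cW_rec n s, ihn (s + 1)]
    have h1 := vcard n s s 2 (by omega)
    rw [show 2 * n + (s + 1) = 2 * n + 1 + s by ring]
    rw [show 2 * (n + 1) + s = 2 * n + 1 + s + 1 by ring]
    have p1 : Nat.choose (2 * n + 1 + s + 1) (n + 1) =
        Nat.choose (2 * n + 1 + s) n + Nat.choose (2 * n + 1 + s) (n + 1) :=
      Nat.choose_succ_succ (2 * n + 1 + s) n
    omega

theorem stmt6 (n : ℕ) (hn : 1 ≤ n) :
    Nat.card {w : Fin n → Letter // IsCodeWord w} = Nat.choose (2 * n) n := by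
  have hcongr : Nat.card {w : Fin n → Letter // IsCodeWord w} = Nat.card (Wsub n 0) := by
    apply Nat.card_congr
    apply Equiv.subtypeEquivRight
    intro w
    constructor
    · rintro ⟨h1, h2⟩
      exact ⟨fun i k hk => h1 i k hk, h2⟩
    · rintro ⟨h1, h2⟩
      exact ⟨fun i k hk => h1 i k hk, h2⟩
  rw [hcongr, wcard n 0, Nat.add_zero]
end

section
/- For every n ≥ 1, there is a bijection between permutations of length n avoiding the patterns 2431, 4231, 1432 and 4132, and code words of length n-1. -/
def Contains {n k : ℕ} (τ : Equiv.Perm (Fin n)) (p : Fin k → ℕ) : Prop :=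
  ∃ f : Fin k → Fin n, StrictMono f ∧ ∀ a b, p a < p b ↔ τ (f a) < τ (f b)

def AvoidsPat {n k : ℕ} (τ : Equiv.Perm (Fin n)) (p : Fin k → ℕ) : Prop := ¬ Contains τ p

/-!
A permutation avoids 2431, 4231, 1432 and 4132 exactly when every *interior* entry (one with both
a smaller and a larger entry to its left) is smaller than every entry to its right. Such
permutations are grown by appending a last entry `v` and shifting the old entries `≥ v` up; the
result is again admissible iff `v` exceeds every interior value, i.e. `v ≥ permLevel σ`. Code words
are grown letter by letter, and which letters may be appended depends only on the integer value
`s` of the last letter (`0` if there is none). For every `s ≠ 1` the admissible values and the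
admissible letters correspond bijectively, with matching new levels, so a level-preserving
bijection is built by induction on the length.
-/

open Equiv

section Patterns

variable {n : ℕ}

def IsInterior (τ : Perm (Fin n)) (k : Fin n) : Prop :=
  (∃ i < k, τ i < τ k) ∧ ∃ j < k, τ k < τ j

def InteriorLtLater (τ : Perm (Fin n)) : Prop :=
  ∀ k l, k < l → IsInterior τ k → τ k < τ l

lemma contains_of_lt_imp {k : ℕ} {τ : Perm (Fin n)} {p : Fin k → ℕ} (hp : p.Injective)
    {f : Fin k → Fin n} (hf : StrictMono f) (h : ∀ a b, p a < p b → τ (f a) < τ (f b)) :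
    Contains τ p := by
  refine ⟨f, hf, fun a b => ⟨h a b, fun hτ => ?_⟩⟩
  rcases lt_trichotomy (p a) (p b) with hab | hab | hab
  · exact hab
  · exact absurd (congrArg (τ ∘ f) (hp hab)) hτ.ne
  · exact absurd (h b a hab) hτ.asymm

lemma strictMono_vecFour {a b c d : Fin n} (hab : a < b) (hbc : b < c) (hcd : c < d) :
    StrictMono ![a, b, c, d] := by
  refine Fin.strictMono_iff_lt_succ.2 fun i => ?_
  fin_cases i
  exacts [hab, hbc, hcd]

lemma contains_vecFour_of_lt_imp {τ : Perm (Fin n)} {p : Fin 4 → ℕ} (hp : p.Injective)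
    {a b c d : Fin n} (hab : a < b) (hbc : b < c) (hcd : c < d)
    (h : ∀ x y, p x < p y → τ (![a, b, c, d] x) < τ (![a, b, c, d] y)) : Contains τ p :=
  contains_of_lt_imp hp (strictMono_vecFour hab hbc hcd) h

lemma avoidsPat_of_interiorLtLater {τ : Perm (Fin n)} (hτ : InteriorLtLater τ) {p : Fin 4 → ℕ}
    (hp₂ : (p 0 < p 2 ∧ p 2 < p 1) ∨ (p 1 < p 2 ∧ p 2 < p 0)) (hp₃ : p 3 < p 2) :
    AvoidsPat τ p := by
  rintro ⟨f, hf, hfp⟩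
  have hint : IsInterior τ (f 2) := by
    rcases hp₂ with ⟨h₀, h₁⟩ | ⟨h₁, h₀⟩
    · exact ⟨⟨f 0, hf (by decide), (hfp 0 2).1 h₀⟩, f 1, hf (by decide), (hfp 2 1).1 h₁⟩
    · exact ⟨⟨f 1, hf (by decide), (hfp 1 2).1 h₁⟩, f 0, hf (by decide), (hfp 2 0).1 h₀⟩
  exact (hτ _ _ (hf (by decide)) hint).asymm ((hfp 3 2).1 hp₃)

/-- A violation `k < l`, `τ l < τ k`, together with the witnesses `i, j < k` of `k` being interior,
forms one of the four patterns, according to the relative order of `i, j` and of `τ i, τ l`. -/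
lemma interiorLtLater_of_avoidsPat {τ : Perm (Fin n)}
    (h₁ : AvoidsPat τ ![2,4,3,1]) (h₂ : AvoidsPat τ ![4,2,3,1])
    (h₃ : AvoidsPat τ ![1,4,3,2]) (h₄ : AvoidsPat τ ![4,1,3,2]) : InteriorLtLater τ := by
  intro k l hkl ⟨⟨i, hik, hi⟩, j, hjk, hj⟩
  by_contra! hlk
  replace hlk : τ l < τ k := hlk.lt_of_ne (τ.injective.ne hkl.ne')
  have hij : i ≠ j := by rintro rfl; exact hi.asymm hj
  have hil : τ i ≠ τ l := τ.injective.ne (hik.trans hkl).ne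
  rcases hij.lt_or_gt with hij | hji <;> rcases hil.lt_or_gt with hil | hli
  · exact h₃ <| contains_vecFour_of_lt_imp (by decide) hij hjk hkl fun x y hxy => by
      fin_cases x <;> fin_cases y <;> simp at hxy ⊢ <;> order
  · exact h₁ <| contains_vecFour_of_lt_imp (by decide) hij hjk hkl fun x y hxy => by
      fin_cases x <;> fin_cases y <;> simp at hxy ⊢ <;> order
  · exact h₄ <| contains_vecFour_of_lt_imp (by decide) hji hik hkl fun x y hxy => by
      fin_cases x <;> fin_cases y <;> simp at hxy ⊢ <;> order
  · exact h₂ <| contains_vecFour_of_lt_imp (by decide) hji hik hkl fun x y hxy => by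
      fin_cases x <;> fin_cases y <;> simp at hxy ⊢ <;> order

lemma avoidsPat_four_iff_interiorLtLater (τ : Perm (Fin n)) :
    (AvoidsPat τ ![2,4,3,1] ∧ AvoidsPat τ ![4,2,3,1] ∧
      AvoidsPat τ ![1,4,3,2] ∧ AvoidsPat τ ![4,1,3,2]) ↔ InteriorLtLater τ := by
  refine ⟨fun ⟨h₁, h₂, h₃, h₄⟩ => interiorLtLater_of_avoidsPat h₁ h₂ h₃ h₄, fun h => ?_⟩
  refine ⟨?_, ?_, ?_, ?_⟩ <;> exact avoidsPat_of_interiorLtLater h (by simp) (by simp)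

end Patterns

section Level

variable {n : ℕ}

open Classical in
/-- The least last entry that can be appended to `τ` keeping `InteriorLtLater`
(see `interiorLtLater_insertLast_iff`). -/
noncomputable def permLevel (τ : Perm (Fin n)) : ℕ :=
  Finset.univ.sup fun k => if IsInterior τ k then (τ k : ℕ) + 1 else 0

lemma permLevel_le_iff {τ : Perm (Fin n)} {X : ℕ} :
    permLevel τ ≤ X ↔ ∀ k, IsInterior τ k → (τ k : ℕ) < X := by
  classical
  simp only [permLevel, Finset.sup_le_iff, Finset.mem_univ, true_implies]
  refine forall_congr' fun k => ?_
  split_ifs with hk <;> simp [hk]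

lemma permLevel_ne_one (τ : Perm (Fin n)) : permLevel τ ≠ 1 := by
  intro h
  have hno : ∀ k, ¬ IsInterior τ k := fun k hk => by
    have hk₁ := permLevel_le_iff.1 h.le k hk
    obtain ⟨⟨i, -, hi⟩, -⟩ := hk
    exact Nat.not_lt_zero _ (Fin.lt_def.1 hi |>.trans_le (Nat.lt_succ_iff.1 hk₁))
  have := (permLevel_le_iff (X := 0)).2 fun k hk => absurd hk (hno k)
  omega

end Level

section Insertion

variable {m : ℕ}

noncomputable def insertLast (σ : Perm (Fin (m + 1))) (v : Fin (m + 2)) : Perm (Fin (m + 2)) :=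
  Equiv.ofBijective (Fin.snoc (α := fun _ => Fin (m + 2)) (v.succAbove ∘ σ) v) <|
    Finite.injective_iff_bijective.1 <|
      Fin.snoc_injective_of_injective (Fin.succAbove_right_injective.comp σ.injective) (by simp)

variable (σ : Perm (Fin (m + 1))) (v : Fin (m + 2))

@[simp]
lemma insertLast_last : insertLast σ v (Fin.last _) = v := by
  simp [insertLast]

@[simp]
lemma insertLast_castSucc (i : Fin (m + 1)) : insertLast σ v i.castSucc = v.succAbove (σ i) := by
  simp [insertLast]

lemma insertLast_injective : Function.Injective fun p : Perm (Fin (m + 1)) × Fin (m + 2) =>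
    insertLast p.1 p.2 := by
  rintro ⟨σ, v⟩ ⟨σ', v'⟩ h
  obtain rfl : v = v' := by simpa using congr($h (Fin.last _))
  obtain rfl : σ = σ' := Equiv.ext fun i => by simpa using congr($h i.castSucc)
  rfl

noncomputable def insertLastEquiv : Perm (Fin (m + 1)) × Fin (m + 2) ≃ Perm (Fin (m + 2)) :=
  Equiv.ofBijective _ <| (Fintype.bijective_iff_injective_and_card _).2
    ⟨insertLast_injective, by simp [Fintype.card_perm, Nat.factorial_succ]; ring⟩

lemma exists_lt_iff_exists_castSucc {P : Fin (m + 2) → Prop} {k : Fin (m + 2)} :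
    (∃ i < k, P i) ↔ ∃ i : Fin (m + 1), i.castSucc < k ∧ P i.castSucc := by
  refine ⟨fun ⟨i, hi, hP⟩ => ?_, fun ⟨i, hi, hP⟩ => ⟨_, hi, hP⟩⟩
  obtain ⟨i, rfl⟩ := Fin.exists_castSucc_eq.2 (Fin.ne_last_of_lt hi)
  exact ⟨i, hi, hP⟩

lemma isInterior_insertLast_castSucc (k : Fin (m + 1)) :
    IsInterior (insertLast σ v) k.castSucc ↔ IsInterior σ k := by
  simp only [IsInterior, exists_lt_iff_exists_castSucc, Fin.castSucc_lt_castSucc_iff,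
    insertLast_castSucc, Fin.succAbove_lt_succAbove_iff]

lemma isInterior_insertLast_last :
    IsInterior (insertLast σ v) (Fin.last _) ↔ 0 < (v : ℕ) ∧ (v : ℕ) < m + 1 := by
  simp only [IsInterior, exists_lt_iff_exists_castSucc, Fin.castSucc_lt_last, true_and,
    insertLast_castSucc, insertLast_last, Fin.succAbove_lt_iff_castSucc_lt,
    Fin.lt_succAbove_iff_le_castSucc]
  rw [← σ.surjective.exists (p := fun a => a.castSucc < v),
    ← σ.surjective.exists (p := fun a => v ≤ a.castSucc)]
  constructor
  · rintro ⟨⟨a, ha⟩, b, hb⟩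
    rw [Fin.lt_def, Fin.val_castSucc] at ha
    rw [Fin.le_def, Fin.val_castSucc] at hb
    omega
  · rintro ⟨h₀, hm⟩
    exact ⟨⟨0, Fin.lt_def.2 h₀⟩, Fin.last m, Fin.le_def.2 (by simpa using Nat.lt_succ_iff.1 hm)⟩

lemma insertLast_castSucc_lt_iff (i j : Fin (m + 1)) :
    insertLast σ v i.castSucc < insertLast σ v j.castSucc ↔ σ i < σ j := by
  simp [Fin.succAbove_lt_succAbove_iff]

lemma insertLast_castSucc_lt_last_iff (i : Fin (m + 1)) :
    insertLast σ v i.castSucc < insertLast σ v (Fin.last _) ↔ (σ i : ℕ) < v := by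
  rw [insertLast_castSucc, insertLast_last, Fin.succAbove_lt_iff_castSucc_lt, Fin.lt_def,
    Fin.val_castSucc]

lemma val_insertLast_castSucc {i : Fin (m + 1)} (hi : (σ i : ℕ) < v) :
    (insertLast σ v i.castSucc : ℕ) = σ i := by
  rw [insertLast_castSucc, Fin.succAbove_of_castSucc_lt _ _ (by rwa [Fin.lt_def, Fin.val_castSucc]),
    Fin.val_castSucc]

lemma interiorLtLater_insertLast_iff :
    InteriorLtLater (insertLast σ v) ↔ InteriorLtLater σ ∧ permLevel σ ≤ v := by
  constructor
  · intro h
    refine ⟨fun k l hkl hk => ?_, permLevel_le_iff.2 fun k hk => ?_⟩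
    · rw [← insertLast_castSucc_lt_iff σ v]
      exact h _ _ (Fin.castSucc_lt_castSucc_iff.2 hkl) ((isInterior_insertLast_castSucc σ v k).2 hk)
    · rw [← insertLast_castSucc_lt_last_iff σ v]
      exact h _ _ (Fin.castSucc_lt_last k) ((isInterior_insertLast_castSucc σ v k).2 hk)
  · rintro ⟨hσ, hv⟩ k l hkl hk
    obtain ⟨k, rfl⟩ := Fin.exists_castSucc_eq.2 (Fin.ne_last_of_lt hkl)
    rw [isInterior_insertLast_castSucc] at hk
    induction l using Fin.lastCases with
    | last => exact (insertLast_castSucc_lt_last_iff σ v k).2 (permLevel_le_iff.1 hv k hk)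
    | cast l =>
      exact (insertLast_castSucc_lt_iff σ v k l).2 (hσ k l (Fin.castSucc_lt_castSucc_iff.1 hkl) hk)

lemma permLevel_insertLast (hv : permLevel σ ≤ v) : permLevel (insertLast σ v) =
    if 0 < (v : ℕ) ∧ (v : ℕ) < m + 1 then (v : ℕ) + 1 else permLevel σ := by
  refine eq_of_forall_ge_iff fun X => ?_
  have hlevel : permLevel σ ≤ X ↔
      ∀ k, IsInterior σ k → (insertLast σ v k.castSucc : ℕ) < X := by
    rw [permLevel_le_iff]
    refine forall₂_congr fun k hk => ?_
    rw [val_insertLast_castSucc σ v (permLevel_le_iff.1 hv k hk)]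
  rw [permLevel_le_iff, Fin.forall_fin_succ']
  simp only [isInterior_insertLast_castSucc, isInterior_insertLast_last, insertLast_last,
    ← hlevel]
  split_ifs with h
  · exact ⟨fun ⟨_, hX⟩ => hX h, fun hX => ⟨hv.trans (by omega), fun _ => hX⟩⟩
  · exact ⟨And.left, fun hX => ⟨hX, fun h' => absurd h' h⟩⟩

end Insertion

section CodeWords

def letterLevel : Letter → ℕ
  | .inl _ => 0
  | .inr k => k

/-- The value of the last letter if it is an integer, else `0`; as integer letters are `≥ 2`,
the value `0` unambiguously means that any letter may follow. -/
def wordLevel : {m : ℕ} → (Fin m → Letter) → ℕ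
  | 0, _ => 0
  | m + 1, w => letterLevel (w (Fin.last m))

def CanAppend (m s : ℕ) : Letter → Prop
  | .inl _ => s = 0
  | .inr k => 2 ≤ k ∧ s ≤ k ∧ k ≤ m + 1

variable {m : ℕ}

lemma isCodeWord_snoc_iff' (w : Fin m → Letter) (x : Letter) :
    IsCodeWord (Fin.snoc w x) ↔ IsCodeWord w ∧ (∀ k, x = .inr k → 2 ≤ k ∧ k ≤ m + 1) ∧
      ∀ i : Fin m, m = (i : ℕ) + 1 → ∀ k, w i = .inr k → ∃ l, x = .inr l ∧ k ≤ l := by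
  have hi : ∀ i : Fin m, (i : ℕ) ≠ m + 1 := fun i => by omega
  simp only [IsCodeWord, Fin.forall_fin_succ', Fin.snoc_castSucc, Fin.snoc_last, Fin.val_castSucc,
    Fin.val_last, forall_and, hi, false_implies, implies_true, and_true]
  tauto

lemma isCodeWord_snoc_iff (w : Fin m → Letter) (x : Letter) :
    IsCodeWord (Fin.snoc w x) ↔ IsCodeWord w ∧ CanAppend m (wordLevel w) x := by
  rw [isCodeWord_snoc_iff']
  refine and_congr_right fun hw => ?_
  cases m with
  | zero => cases x <;> simp [CanAppend, wordLevel]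
  | succ m =>
    have hi : ∀ i : Fin m, m + 1 ≠ (i : ℕ) + 1 := fun i => by omega
    simp only [Fin.forall_fin_succ', Fin.val_castSucc, Fin.val_last, hi, false_implies,
      implies_true, true_and, true_implies, wordLevel]
    cases hl : w (Fin.last m) with
    | inl b => cases x <;> simp [CanAppend, letterLevel]
    | inr k =>
      have := hw.1 _ _ hl
      cases x <;> simp [CanAppend, letterLevel] <;> omega

end CodeWords

section Fiber

variable {m s : ℕ}

/-- Appending the value `v` to a permutation of level `s` corresponds to appending this letter:
the extreme values `0` and `m + 1`, which create no new interior entry, become `B` and `E` (or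
the integer `s` again if `s ≥ 2`), and any other value `v` becomes the integer `v + 1`, the new
level. -/
def letterOfValue (m s v : ℕ) : Letter :=
  if v = 0 then .inl true else if v = m + 1 then (if s = 0 then .inl false else .inr s)
  else .inr (v + 1)

def valueOfLetter (m s : ℕ) : Letter → ℕ
  | .inl true => 0
  | .inl false => m + 1
  | .inr k => if k = s then m + 1 else k - 1

lemma canAppend_letterOfValue (hs : s ≠ 1) {v : ℕ} (hsv : s ≤ v) (hv : v ≤ m + 1) :
    CanAppend m s (letterOfValue m s v) := by
  unfold letterOfValue
  split_ifs <;> simp only [CanAppend] <;> omega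

lemma valueOfLetter_le {x : Letter} (hx : CanAppend m s x) :
    s ≤ valueOfLetter m s x ∧ valueOfLetter m s x ≤ m + 1 := by
  rcases x with (_ | _) | k <;> simp only [CanAppend, valueOfLetter] at hx ⊢
  all_goals (try split_ifs) <;> omega

lemma valueOfLetter_letterOfValue {v : ℕ} (hsv : s ≤ v) :
    valueOfLetter m s (letterOfValue m s v) = v := by
  unfold letterOfValue
  split_ifs <;> simp only [valueOfLetter] <;> (try split_ifs) <;> omega

lemma letterOfValue_valueOfLetter {x : Letter} (hx : CanAppend m s x) :
    letterOfValue m s (valueOfLetter m s x) = x := by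
  rcases x with (_ | _) | k <;> simp only [CanAppend, valueOfLetter] at hx ⊢
  all_goals (try split_ifs) <;> unfold letterOfValue <;> split_ifs
  all_goals first | rfl | contradiction | (congr 1; omega)

lemma letterLevel_letterOfValue {v : ℕ} (hsv : s ≤ v) (hv : v ≤ m + 1) :
    letterLevel (letterOfValue m s v) = if 0 < v ∧ v < m + 1 then v + 1 else s := by
  unfold letterOfValue
  split_ifs <;> simp only [letterLevel] <;> omega

def valueEquivLetter (m s : ℕ) (hs : s ≠ 1) :
    {v : Fin (m + 2) // s ≤ v} ≃ {x : Letter // CanAppend m s x} where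
  toFun v := ⟨letterOfValue m s v, canAppend_letterOfValue hs v.2 (Nat.lt_succ_iff.1 v.1.2)⟩
  invFun x := ⟨⟨valueOfLetter m s x, Nat.lt_succ_iff.2 (valueOfLetter_le x.2).2⟩,
    (valueOfLetter_le x.2).1⟩
  left_inv v := by simp [valueOfLetter_letterOfValue v.2]
  right_inv x := by simp [letterOfValue_valueOfLetter x.2]

end Fiber

def subtypeProdAndEquivSigma {α β : Type*} (P : α → Prop) (Q : α → β → Prop) :
    {p : α × β // P p.1 ∧ Q p.1 p.2} ≃ Σ a : {a // P a}, {b // Q a b} where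
  toFun p := ⟨⟨p.1.1, p.2.1⟩, ⟨p.1.2, p.2.2⟩⟩
  invFun q := ⟨(q.1.1, q.2.1), q.1.2, q.2.2⟩

noncomputable def interiorLtLaterSigmaEquiv (m : ℕ) :
    {τ : Perm (Fin (m + 2)) // InteriorLtLater τ} ≃
      Σ σ : {σ : Perm (Fin (m + 1)) // InteriorLtLater σ}, {v : Fin (m + 2) // permLevel σ.1 ≤ v} :=
  (insertLastEquiv.subtypeEquiv fun p => (interiorLtLater_insertLast_iff p.1 p.2).symm).symm.trans
    (subtypeProdAndEquivSigma InteriorLtLater fun σ (v : Fin (m + 2)) => permLevel σ ≤ v)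

def codeWordSigmaEquiv (m : ℕ) :
    {w : Fin (m + 1) → Letter // IsCodeWord w} ≃
      Σ w : {w : Fin m → Letter // IsCodeWord w}, {x : Letter // CanAppend m (wordLevel w.1) x} :=
  (((Equiv.prodComm _ _).trans (Fin.snocEquiv fun _ => Letter)).subtypeEquiv
    fun p => (isCodeWord_snoc_iff p.1 p.2).symm).symm.trans
    (subtypeProdAndEquivSigma IsCodeWord fun w x => CanAppend m (wordLevel w) x)

lemma interiorLtLaterSigmaEquiv_symm_apply_coe {m : ℕ}
    (σ : {σ : Perm (Fin (m + 1)) // InteriorLtLater σ})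
    (v : {v : Fin (m + 2) // permLevel σ.1 ≤ v}) :
    ((interiorLtLaterSigmaEquiv m).symm ⟨σ, v⟩ : Perm (Fin (m + 2))) = insertLast σ v :=
  rfl

lemma codeWordSigmaEquiv_symm_apply_coe {m : ℕ} (w : {w : Fin m → Letter // IsCodeWord w})
    (x : {x : Letter // CanAppend m (wordLevel w.1) x}) :
    ((codeWordSigmaEquiv m).symm ⟨w, x⟩ : Fin (m + 1) → Letter) = Fin.snoc w.1 x.1 :=
  rfl

lemma wordLevel_snoc {m : ℕ} (w : Fin m → Letter) (x : Letter) :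
    wordLevel (Fin.snoc w x) = letterLevel x := by
  simp [wordLevel]

theorem exists_equiv_wordLevel_eq_permLevel (m : ℕ) :
    ∃ e : {τ : Perm (Fin (m + 1)) // InteriorLtLater τ} ≃ {w : Fin m → Letter // IsCodeWord w},
      ∀ τ, wordLevel (e τ).1 = permLevel τ.1 := by
  induction m with
  | zero =>
    have hτ : ∀ τ : Perm (Fin 1), InteriorLtLater τ := fun τ k l hkl => by omega
    have hw : IsCodeWord (Fin.elim0 : Fin 0 → Letter) := ⟨nofun, nofun⟩
    refine ⟨⟨fun _ => ⟨_, hw⟩, fun _ => ⟨1, hτ 1⟩,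
      fun _ => Subtype.ext (Equiv.ext fun _ => Fin.ext (by omega)),
      fun _ => Subsingleton.elim _ _⟩, fun τ => ?_⟩
    exact (Nat.le_zero.1 <| permLevel_le_iff.2 fun k ⟨⟨i, hik, _⟩, _⟩ => by omega).symm
  | succ m ih =>
    obtain ⟨e, he⟩ := ih
    let F (σ : {σ : Perm (Fin (m + 1)) // InteriorLtLater σ}) :
        {v : Fin (m + 2) // permLevel σ.1 ≤ v} ≃ {x // CanAppend m (wordLevel (e σ).1) x} :=
      (valueEquivLetter m _ (permLevel_ne_one σ.1)).trans
        (Equiv.subtypeEquivRight fun x => by rw [he])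
    refine ⟨(interiorLtLaterSigmaEquiv m).trans ((Equiv.sigmaCongr e F).trans
      (codeWordSigmaEquiv m).symm), fun τ => ?_⟩
    obtain ⟨⟨σ, v⟩, rfl⟩ := (interiorLtLaterSigmaEquiv m).symm.surjective τ
    rw [Equiv.trans_apply, Equiv.apply_symm_apply]
    change wordLevel ((codeWordSigmaEquiv m).symm ⟨e σ, F σ v⟩ : Fin (m + 1) → Letter) = _
    rw [codeWordSigmaEquiv_symm_apply_coe, wordLevel_snoc, interiorLtLaterSigmaEquiv_symm_apply_coe,
      permLevel_insertLast _ _ v.2]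
    exact letterLevel_letterOfValue v.2 (Nat.lt_succ_iff.1 v.1.2)

theorem stmt8 (n : ℕ) (hn : 1 ≤ n) :
    Nonempty (
      {τ : Equiv.Perm (Fin n) //
        AvoidsPat τ ![2,4,3,1] ∧ AvoidsPat τ ![4,2,3,1] ∧
        AvoidsPat τ ![1,4,3,2] ∧ AvoidsPat τ ![4,1,3,2]} ≃
      {w : Fin (n - 1) → Letter // IsCodeWord w}) := by
  obtain ⟨m, rfl⟩ : ∃ m, n = m + 1 := ⟨n - 1, by omega⟩
  obtain ⟨e, -⟩ := exists_equiv_wordLevel_eq_permLevel m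
  exact ⟨(Equiv.subtypeEquivRight avoidsPat_four_iff_interiorLtLater).trans e⟩
end

section
/- Let π be a permutation of length n-1 avoiding 2431, 4231, 1432, 4132, and suppose π contains a 132-pattern at indices j < i < k (so π(j) < π(k) < π(i)). Then inserting the new maximal element n at any position ≤ i creates one of the forbidden patterns 4132 or 1432. -/
/-- Insert a new maximal element into the permutation `π` at (0-based) position `p`:
the resulting permutation of `Fin (m+1)` takes the top value `Fin.last m` at position `p`
and the values of `π` (in order) at the remaining positions. -/
def insertMax {m : ℕ} (π : Equiv.Perm (Fin m)) (p : Fin (m + 1)) : Equiv.Perm (Fin (m + 1)) :=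
  (finSuccEquiv' p).trans ((Equiv.optionCongr π).trans (finSuccEquiv' (Fin.last m)).symm)


lemma strictMono4 {n : ℕ} {a b c d : Fin n} (h1 : a < b) (h2 : b < c) (h3 : c < d) :
    StrictMono ![a,b,c,d] := by
  intro x y hxy
  fin_cases x <;> fin_cases y <;>
    simp_all <;> first | exact h1.trans h2 | exact h2.trans h3 | exact (h1.trans h2).trans h3

lemma contains4132 {n : ℕ} (τ : Equiv.Perm (Fin n)) {a b c d : Fin n}
    (hab : a < b) (hbc : b < c) (hcd : c < d)
    (v1 : τ b < τ d) (v2 : τ d < τ c) (v3 : τ c < τ a) :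
    Contains τ ![4,1,3,2] := by
  refine ⟨![a,b,c,d], strictMono4 hab hbc hcd, ?_⟩
  have v4 := v1.trans v2
  have v5 := v2.trans v3
  have v6 := v4.trans v3
  intro x y
  fin_cases x <;> fin_cases y <;>
    simp_all [lt_irrefl, le_of_lt, not_lt_of_gt]

lemma contains1432 {n : ℕ} (τ : Equiv.Perm (Fin n)) {a b c d : Fin n}
    (hab : a < b) (hbc : b < c) (hcd : c < d)
    (v1 : τ a < τ d) (v2 : τ d < τ c) (v3 : τ c < τ b) :
    Contains τ ![1,4,3,2] := by
  refine ⟨![a,b,c,d], strictMono4 hab hbc hcd, ?_⟩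
  have v4 := v1.trans v2
  have v5 := v2.trans v3
  have v6 := v4.trans v3
  intro x y
  fin_cases x <;> fin_cases y <;>
    simp_all [lt_irrefl, le_of_lt, not_lt_of_gt]

theorem stmt9 {m : ℕ} (π : Equiv.Perm (Fin m))
    (hav : AvoidsPat π ![2,4,3,1] ∧ AvoidsPat π ![4,2,3,1] ∧
           AvoidsPat π ![1,4,3,2] ∧ AvoidsPat π ![4,1,3,2])
    (j i k : Fin m) (hji : j < i) (hik : i < k)
    (h1 : π j < π k) (h2 : π k < π i)
    (q : Fin (m + 1)) (hq : (q : ℕ) ≤ (i : ℕ)) :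
    Contains (insertMax π q) ![4,1,3,2] ∨ Contains (insertMax π q) ![1,4,3,2] := by
  have hmax : ∀ x : Fin m, insertMax π q (q.succAbove x) = (π x).castSucc := by
    intro x
    simp [insertMax, Fin.succAbove_last]
  have hq' : insertMax π q q = Fin.last m := by
    simp [insertMax]
  have hsi : q.succAbove i = i.succ := Fin.succAbove_of_le_castSucc _ _ (by
    simp [Fin.le_def]; omega)
  have hsk : q.succAbove k = k.succ := Fin.succAbove_of_le_castSucc _ _ (by
    simp [Fin.le_def]; have := hik.trans_le' hji.le; omega)
  have hik' : i.succ < k.succ := Fin.succ_lt_succ_iff.2 hik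
  have v1 : (π j).castSucc < (π k).castSucc := Fin.castSucc_lt_castSucc_iff.2 h1
  have v2 : (π k).castSucc < (π i).castSucc := Fin.castSucc_lt_castSucc_iff.2 h2
  by_cases hqj : (q : ℕ) ≤ (j : ℕ)
  · left
    have hsj : q.succAbove j = j.succ := Fin.succAbove_of_le_castSucc _ _ (by
      simp [Fin.le_def, hqj])
    refine contains4132 _ (a := q) (b := j.succ) (c := i.succ) (d := k.succ)
      (by simp [Fin.lt_def]; omega) (Fin.succ_lt_succ_iff.2 hji) hik' ?_ ?_ ?_
    · rw [← hsj, ← hsk, hmax, hmax]; exact v1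
    · rw [← hsk, ← hsi, hmax, hmax]; exact v2
    · rw [← hsi, hmax, hq']; exact Fin.castSucc_lt_last _
  · right
    push_neg at hqj
    have hsj : q.succAbove j = j.castSucc := Fin.succAbove_of_castSucc_lt _ _ (by
      simp [Fin.lt_def, hqj])
    refine contains1432 _ (a := j.castSucc) (b := q) (c := i.succ) (d := k.succ)
      (by simp [Fin.lt_def]; omega) (by simp [Fin.lt_def]; omega) hik' ?_ ?_ ?_
    · rw [← hsj, ← hsk, hmax, hmax]; exact v1
    · rw [← hsk, ← hsi, hmax, hmax]; exact v2
    · rw [← hsi, hmax, hq']; exact Fin.castSucc_lt_last _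
end

section
/- Let π be a permutation of length n-1 avoiding 2431, 4231, 1432, 4132, and let p(π) be the maximal index i such that there exist j < i < k with π(j) < π(i) and π(k) < π(i) (with p(π) = 0 if no such i exists). Then inserting the element n at position q yields a permutation avoiding all four patterns if and only if q > p(π). -/
/-- `pVal π` is the maximal 1-based position `i` such that there are `j < i < k` with
`π j < π i` and `π k < π i` (the position of the rightmost entry playing the role of the
`3` in a `132`- or `231`-pattern), and `0` if no such position exists. -/
noncomputable def pVal {m : ℕ} (π : Equiv.Perm (Fin m)) : ℕ :=
  sSup {v : ℕ | ∃ j i k : Fin m, j < i ∧ i < k ∧ π j < π i ∧ π k < π i ∧ v = (i : ℕ) + 1}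

def IsPeak {n : ℕ} (τ : Equiv.Perm (Fin n)) (i : Fin n) : Prop :=
  ∃ j k, j < i ∧ i < k ∧ τ j < τ i ∧ τ k < τ i

def HasShadowedPeak {n : ℕ} (τ : Equiv.Perm (Fin n)) : Prop :=
  ∃ y i, y < i ∧ τ i < τ y ∧ IsPeak τ i

lemma contains_of_lt_of_lt_of_lt {n : ℕ} {τ : Equiv.Perm (Fin n)} {p : Fin 4 → ℕ}
    {a b c d : Fin n} (hab : a < b) (hbc : b < c) (hcd : c < d)
    (h : ∀ x y : Fin 4, p x < p y ↔ τ (![a, b, c, d] x) < τ (![a, b, c, d] y)) :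
    Contains τ p := by
  refine ⟨![a, b, c, d], Fin.strictMono_iff_lt_succ.2 fun i => ?_, h⟩
  fin_cases i <;> assumption

lemma contains_four_iff_hasShadowedPeak {n : ℕ} (τ : Equiv.Perm (Fin n)) :
    (Contains τ ![2,4,3,1] ∨ Contains τ ![4,2,3,1] ∨
     Contains τ ![1,4,3,2] ∨ Contains τ ![4,1,3,2]) ↔ HasShadowedPeak τ := by
  constructor
  · have h01 : (0 : Fin 4) < 1 := by decide
    have h12 : (1 : Fin 4) < 2 := by decide
    have h23 : (2 : Fin 4) < 3 := by decide
    rintro (⟨f, hf, hp⟩ | ⟨f, hf, hp⟩ | ⟨f, hf, hp⟩ | ⟨f, hf, hp⟩) <;>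
    first
    | exact ⟨f 1, f 2, hf h12, (hp 2 1).1 (by decide),
        f 0, f 3, hf (h01.trans h12), hf h23, (hp 0 2).1 (by decide), (hp 3 2).1 (by decide)⟩
    | exact ⟨f 0, f 2, hf (h01.trans h12), (hp 2 0).1 (by decide),
        f 1, f 3, hf h12, hf h23, (hp 1 2).1 (by decide), (hp 3 2).1 (by decide)⟩
  · rintro ⟨y, i, hyi, hiy, j, k, hji, hik, hτji, hτki⟩
    have hjy : j ≠ y := by rintro rfl; exact lt_asymm hτji hiy
    have hjk : τ j ≠ τ k := τ.injective.ne (hji.trans hik).ne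
    rcases hjy.lt_or_gt with hjy | hyj <;> rcases hjk.lt_or_gt with hτjk | hτkj
    · refine Or.inr <| Or.inr <| Or.inl <| contains_of_lt_of_lt_of_lt hjy hyi hik fun a b => ?_
      fin_cases a <;> fin_cases b <;> simp <;> order
    · refine Or.inl <| contains_of_lt_of_lt_of_lt hjy hyi hik fun a b => ?_
      fin_cases a <;> fin_cases b <;> simp <;> order
    · refine Or.inr <| Or.inr <| Or.inr <| contains_of_lt_of_lt_of_lt hyj hji hik fun a b => ?_
      fin_cases a <;> fin_cases b <;> simp <;> order
    · refine Or.inr <| Or.inl <| contains_of_lt_of_lt_of_lt hyj hji hik fun a b => ?_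
      fin_cases a <;> fin_cases b <;> simp <;> order

lemma avoidsPat_four_iff {n : ℕ} (τ : Equiv.Perm (Fin n)) :
    (AvoidsPat τ ![2,4,3,1] ∧ AvoidsPat τ ![4,2,3,1] ∧
     AvoidsPat τ ![1,4,3,2] ∧ AvoidsPat τ ![4,1,3,2]) ↔ ¬ HasShadowedPeak τ := by
  rw [← contains_four_iff_hasShadowedPeak]
  simp only [AvoidsPat, not_or]

lemma pVal_le_iff {m : ℕ} (π : Equiv.Perm (Fin m)) (t : ℕ) :
    pVal π ≤ t ↔ ∀ i, IsPeak π i → (i : ℕ) < t := by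
  have hbdd : BddAbove
      {v : ℕ | ∃ j i k : Fin m, j < i ∧ i < k ∧ π j < π i ∧ π k < π i ∧ v = (i : ℕ) + 1} :=
    ⟨m, by rintro v ⟨j, i, k, -, -, -, -, rfl⟩; exact i.isLt⟩
  rw [pVal, csSup_le_iff' hbdd]
  constructor
  · rintro h i ⟨j, k, hji, hik, hτj, hτk⟩
    exact Nat.add_one_le_iff.1 (h _ ⟨j, i, k, hji, hik, hτj, hτk, rfl⟩)
  · rintro h _ ⟨j, i, k, hji, hik, hτj, hτk, rfl⟩
    exact Nat.add_one_le_iff.2 (h i ⟨j, k, hji, hik, hτj, hτk⟩)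

section insertMax

variable {m : ℕ} (π : Equiv.Perm (Fin m)) (q : Fin (m + 1))

@[simp]
lemma insertMax_self : insertMax π q q = Fin.last m := by
  simp [insertMax, finSuccEquiv'_at]

@[simp]
lemma insertMax_succAbove (j : Fin m) : insertMax π q (q.succAbove j) = (π j).castSucc := by
  simp [insertMax, finSuccEquiv'_succAbove, finSuccEquiv'_symm_some]

lemma exists_succAbove_eq_of_insertMax_lt {x z : Fin (m + 1)}
    (h : insertMax π q x < insertMax π q z) : ∃ j, q.succAbove j = x := by
  refine Fin.exists_succAbove_eq ?_
  rintro rfl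
  rw [insertMax_self] at h
  exact (Fin.le_last _).not_gt h

lemma isPeak_insertMax_succAbove_iff (i : Fin m) :
    IsPeak (insertMax π q) (q.succAbove i) ↔ IsPeak π i := by
  constructor
  · rintro ⟨j, k, hji, hik, hτj, hτk⟩
    obtain ⟨j, rfl⟩ := exists_succAbove_eq_of_insertMax_lt π q hτj
    obtain ⟨k, rfl⟩ := exists_succAbove_eq_of_insertMax_lt π q hτk
    simp only [insertMax_succAbove, Fin.castSucc_lt_castSucc_iff,
      Fin.succAbove_lt_succAbove_iff] at hji hik hτj hτk
    exact ⟨j, k, hji, hik, hτj, hτk⟩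
  · rintro ⟨j, k, hji, hik, hτj, hτk⟩
    exact ⟨q.succAbove j, q.succAbove k, Fin.succAbove_lt_succAbove_iff.2 hji,
      Fin.succAbove_lt_succAbove_iff.2 hik, by simpa using hτj, by simpa using hτk⟩

lemma hasShadowedPeak_insertMax_iff :
    HasShadowedPeak (insertMax π q) ↔ HasShadowedPeak π ∨ ∃ i, IsPeak π i ∧ (q : ℕ) ≤ i := by
  constructor
  · rintro ⟨y, c, hyc, hcy, hpeak⟩
    obtain ⟨i, rfl⟩ := exists_succAbove_eq_of_insertMax_lt π q hcy
    rw [isPeak_insertMax_succAbove_iff] at hpeak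
    rcases q.eq_self_or_eq_succAbove y with rfl | ⟨y, rfl⟩
    · exact Or.inr ⟨i, hpeak, (Fin.lt_succAbove_iff_le_castSucc _ _).1 hyc⟩
    · simp only [insertMax_succAbove, Fin.castSucc_lt_castSucc_iff,
        Fin.succAbove_lt_succAbove_iff] at hyc hcy
      exact Or.inl ⟨y, i, hyc, hcy, hpeak⟩
  · rintro (⟨y, i, hyi, hiy, hpeak⟩ | ⟨i, hpeak, hqi⟩)
    · exact ⟨q.succAbove y, q.succAbove i, Fin.succAbove_lt_succAbove_iff.2 hyi,
        by simpa using hiy, (isPeak_insertMax_succAbove_iff π q i).2 hpeak⟩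
    · exact ⟨q, q.succAbove i, (Fin.lt_succAbove_iff_le_castSucc _ _).2 hqi,
        by simp, (isPeak_insertMax_succAbove_iff π q i).2 hpeak⟩

end insertMax

theorem stmt11 {m : ℕ} (π : Equiv.Perm (Fin m))
    (hav : AvoidsPat π ![2,4,3,1] ∧ AvoidsPat π ![4,2,3,1] ∧
           AvoidsPat π ![1,4,3,2] ∧ AvoidsPat π ![4,1,3,2])
    (q : Fin (m + 1)) :
    (AvoidsPat (insertMax π q) ![2,4,3,1] ∧ AvoidsPat (insertMax π q) ![4,2,3,1] ∧
     AvoidsPat (insertMax π q) ![1,4,3,2] ∧ AvoidsPat (insertMax π q) ![4,1,3,2]) ↔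
    pVal π < (q : ℕ) + 1 := by
  rw [avoidsPat_four_iff] at hav ⊢
  rw [hasShadowedPeak_insertMax_iff, Nat.lt_add_one_iff, pVal_le_iff]
  simp only [hav, false_or, not_exists, not_and, not_le]
end

section
/- For every n ≥ 1, the number of permutations of length n avoiding the four patterns 1324, 1342, 1432 and 4132 equals the central binomial coefficient C(2(n-1), n-1). -/
/-!
The four patterns 1324, 1342, 1432 and 4132 are exactly the four ways of inserting a new largest
entry into 132. So a permutation of length `n` avoids all four iff deleting its largest entry
leaves a 132-avoiding permutation of length `n - 1`, and that entry may sit in any of the `n`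
positions. A 132-avoider splits at its maximum as `s ++ max :: t` with `s`, `t` again 132-avoiding
and every entry of `s` above every entry of `t`; this is the recursion of binary trees, so there are
`catalan (n - 1)` of them, and `n * catalan (n - 1)` is the central binomial coefficient.
-/

open List

namespace List

theorem ofFn_sublist_ofFn_iff {α : Type*} {k n : ℕ} {f : Fin k → α} {g : Fin n → α} :
    ofFn f <+ ofFn g ↔ ∃ e : Fin k → Fin n, StrictMono e ∧ f = g ∘ e := by
  rw [sublist_iff_exists_fin_orderEmbedding_get_eq]
  have ck : (ofFn f).length = k := length_ofFn
  have cn : (ofFn g).length = n := length_ofFn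
  constructor
  · rintro ⟨e, he⟩
    refine ⟨Fin.cast cn ∘ e ∘ Fin.cast ck.symm, ?_, funext fun i => ?_⟩
    · exact (Fin.castOrderIso cn).strictMono.comp
        (e.strictMono.comp (Fin.castOrderIso ck.symm).strictMono)
    · simpa [Fin.cast] using he (Fin.cast ck.symm i)
  · rintro ⟨e, he, rfl⟩
    refine ⟨(Fin.castOrderIso ck).toOrderEmbedding.trans
      ((OrderEmbedding.ofStrictMono e he).trans (Fin.castOrderIso cn.symm).toOrderEmbedding),
      fun i => ?_⟩
    simp [Fin.cast]

theorem Sublist.sublist_erase_of_notMem {α : Type*} [BEq α] [LawfulBEq α] {s l : List α} {x : α}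
    (h : s <+ l) (hx : x ∉ s) : s <+ l.erase x := by
  simpa [erase_of_not_mem hx] using h.erase x

theorem idxOf_insertIdx_of_notMem {α : Type*} [BEq α] [LawfulBEq α] {a : α} :
    ∀ {l : List α} {i : ℕ}, a ∉ l → i ≤ l.length → (l.insertIdx i a).idxOf a = i
  | _, 0, _, _ => by simp
  | b :: l, i + 1, ha, hi => by
    rw [insertIdx_succ_cons, idxOf_cons_ne _ (Ne.symm (ne_of_not_mem_cons ha)),
      idxOf_insertIdx_of_notMem (not_mem_of_not_mem_cons ha) (by simpa using hi)]

theorem Nodup.perm_range {l : List ℕ} (hl : l.Nodup) (h : ∀ x ∈ l, x < l.length) :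
    l ~ range l.length :=
  (hl.subperm fun x hx => mem_range.2 (h x hx)).perm_of_length_le (by simp)

theorem right_perm_range_of_append_perm_range {s t : List ℕ} {n : ℕ} (h : s ++ t ~ range n)
    (hst : ∀ x ∈ s, ∀ y ∈ t, y < x) : t ~ range t.length := by
  have hmem : ∀ z, z ∈ s ++ t ↔ z < n := by simp [h.mem_iff]
  refine ((nodup_append.1 (h.nodup_iff.2 nodup_range)).2.1).perm_range fun y hy => ?_
  have hsub : range (y + 1) ⊆ t := fun z hz => by
    have hzy : z ≤ y := Nat.lt_succ_iff.1 (mem_range.1 hz)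
    have hzn : z < n := hzy.trans_lt ((hmem y).1 (mem_append_right s hy))
    rcases mem_append.1 ((hmem z).2 hzn) with hzs | hzt
    · exact absurd (hst z hzs y hy) hzy.not_gt
    · exact hzt
  simpa using ((nodup_range).subperm hsub).length_le

theorem left_eq_map_add_of_append_perm_range {s t : List ℕ} {n : ℕ} (h : s ++ t ~ range n)
    (hst : ∀ x ∈ s, ∀ y ∈ t, y < x) :
    ∃ s', s' ~ range s.length ∧ s'.map (· + t.length) = s := by
  have hnd := h.nodup_iff.2 nodup_range
  have ht := right_perm_range_of_append_perm_range h hst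
  have hn : s.length + t.length = n := by simpa using h.length_eq
  have hge : ∀ x ∈ s, t.length ≤ x := fun x hx => not_lt.1 fun hlt =>
    (nodup_append.1 hnd).2.2 x hx x (ht.mem_iff.2 (mem_range.2 hlt)) rfl
  refine ⟨s.map (· - t.length), ?_, ?_⟩
  · have hnd' : (s.map (· - t.length)).Nodup := (nodup_append.1 hnd).1.map_on
      fun x hx y hy hxy => by have := hge x hx; have := hge y hy; omega
    simpa using hnd'.perm_range fun y hy => by
      obtain ⟨x, hx, rfl⟩ := mem_map.1 hy
      have := mem_range.1 (h.subset (mem_append_left t hx))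
      have := hge x hx
      rw [length_map]; omega
  · rw [map_map]
    exact (map_congr_left fun x hx => Nat.sub_add_cancel (hge x hx)).trans (map_id s)

def permConsEraseEquiv {α : Type*} [DecidableEq α] (a : α) {L : List α} (ha : a ∉ L)
    (P : List α → Prop) :
    {l : List α // l ~ a :: L ∧ P (l.erase a)} ≃ Fin (L.length + 1) × {l : List α // l ~ L ∧ P l}
    where
  toFun l := (⟨l.1.idxOf a,
      (idxOf_lt_length_of_mem (l.2.1.mem_iff.2 mem_cons_self)).trans_eq l.2.1.length_eq⟩,
    ⟨l.1.erase a, by simpa using l.2.1.erase a, l.2.2⟩)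
  invFun p := ⟨p.2.1.insertIdx p.1 a, by
    have hi : (p.1 : ℕ) ≤ p.2.1.length := by rw [p.2.2.1.length_eq]; exact Fin.is_le p.1
    have ha' : a ∉ p.2.1 := fun h => ha (p.2.2.1.mem_iff.1 h)
    refine ⟨(perm_insertIdx a _ hi).trans (p.2.2.1.cons a), ?_⟩
    rw [erase_eq_eraseIdx_of_idxOf (idxOf_insertIdx_of_notMem ha' hi), eraseIdx_insertIdx_self]
    exact p.2.2.2⟩
  left_inv l := by
    have hlt := idxOf_lt_length_of_mem (l.2.1.mem_iff.2 (mem_cons_self (a := a) (l := L)))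
    ext1
    dsimp only
    conv_lhs => rw [erase_eq_eraseIdx_of_idxOf rfl]; arg 3; rw [← getElem_idxOf hlt]
    exact insertIdx_eraseIdx_getElem hlt
  right_inv p := by
    have hi : (p.1 : ℕ) ≤ p.2.1.length := by rw [p.2.2.1.length_eq]; exact Fin.is_le p.1
    have ha' : a ∉ p.2.1 := fun h => ha (p.2.2.1.mem_iff.1 h)
    ext
    · exact idxOf_insertIdx_of_notMem ha' hi
    · dsimp only
      rw [erase_eq_eraseIdx_of_idxOf (idxOf_insertIdx_of_notMem ha' hi), eraseIdx_insertIdx_self]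

theorem card_perm_range_succ_erase (m : ℕ) (P : List ℕ → Prop) :
    Nat.card {l : List ℕ // l ~ range (m + 1) ∧ P (l.erase m)} =
      (m + 1) * Nat.card {l : List ℕ // l ~ range m ∧ P l} := by
  have hrange : range (m + 1) ~ m :: range m := by simp [range_succ]
  rw [Nat.card_congr (Equiv.subtypeEquivRight fun l => and_congr_left' (hrange.congr_right l)),
    Nat.card_congr (permConsEraseEquiv m not_mem_range_self P), Nat.card_prod, Nat.card_fin,
    length_range]

section Patterns

variable {α : Type*} [LinearOrder α]

def ContainsPattern {k : ℕ} (l : List α) (p : Fin k → ℕ) : Prop :=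
  ∃ f : Fin k → α, ofFn f <+ l ∧ ∀ a b, p a < p b ↔ f a < f b

theorem containsPattern_132_iff {l : List α} :
    l.ContainsPattern ![1,3,2] ↔ ∃ a b c, [a, b, c] <+ l ∧ a < c ∧ c < b := by
  simp only [ContainsPattern, Fin.exists_fin_succ_pi, Fin.exists_fin_zero_pi, ofFn_succ,
    Fin.forall_fin_succ, Fin.cons_zero, Fin.cons_succ, ofFn_zero, Matrix.cons_val_zero,
    Matrix.cons_val_succ, IsEmpty.forall_iff, and_true]
  exact exists₃_congr fun a b c => and_congr_right fun _ => by grind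

theorem containsPattern_1324_iff {l : List α} :
    l.ContainsPattern ![1,3,2,4] ↔ ∃ a b c d, [a, b, c, d] <+ l ∧ a < c ∧ c < b ∧ b < d := by
  simp only [ContainsPattern, Fin.exists_fin_succ_pi, Fin.exists_fin_zero_pi, ofFn_succ,
    Fin.forall_fin_succ, Fin.cons_zero, Fin.cons_succ, ofFn_zero, Matrix.cons_val_zero,
    Matrix.cons_val_succ, IsEmpty.forall_iff, and_true]
  exact exists₄_congr fun a b c d => and_congr_right fun _ => by grind

theorem containsPattern_1342_iff {l : List α} :
    l.ContainsPattern ![1,3,4,2] ↔ ∃ a b c d, [a, b, c, d] <+ l ∧ a < d ∧ d < b ∧ b < c := by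
  simp only [ContainsPattern, Fin.exists_fin_succ_pi, Fin.exists_fin_zero_pi, ofFn_succ,
    Fin.forall_fin_succ, Fin.cons_zero, Fin.cons_succ, ofFn_zero, Matrix.cons_val_zero,
    Matrix.cons_val_succ, IsEmpty.forall_iff, and_true]
  exact exists₄_congr fun a b c d => and_congr_right fun _ => by grind

theorem containsPattern_1432_iff {l : List α} :
    l.ContainsPattern ![1,4,3,2] ↔ ∃ a b c d, [a, b, c, d] <+ l ∧ a < d ∧ d < c ∧ c < b := by
  simp only [ContainsPattern, Fin.exists_fin_succ_pi, Fin.exists_fin_zero_pi, ofFn_succ,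
    Fin.forall_fin_succ, Fin.cons_zero, Fin.cons_succ, ofFn_zero, Matrix.cons_val_zero,
    Matrix.cons_val_succ, IsEmpty.forall_iff, and_true]
  exact exists₄_congr fun a b c d => and_congr_right fun _ => by grind

theorem containsPattern_4132_iff {l : List α} :
    l.ContainsPattern ![4,1,3,2] ↔ ∃ a b c d, [a, b, c, d] <+ l ∧ b < d ∧ d < c ∧ c < a := by
  simp only [ContainsPattern, Fin.exists_fin_succ_pi, Fin.exists_fin_zero_pi, ofFn_succ,
    Fin.forall_fin_succ, Fin.cons_zero, Fin.cons_succ, ofFn_zero, Matrix.cons_val_zero,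
    Matrix.cons_val_succ, IsEmpty.forall_iff, and_true]
  exact exists₄_congr fun a b c d => and_congr_right fun _ => by grind

theorem containsPattern_132_erase_max_iff {L : List α} {M : α} (hL : L.Nodup) (hM : M ∈ L)
    (hmax : ∀ x ∈ L, x ≤ M) :
    (L.erase M).ContainsPattern ![1,3,2] ↔
      L.ContainsPattern ![1,3,2,4] ∨ L.ContainsPattern ![1,3,4,2] ∨
        L.ContainsPattern ![1,4,3,2] ∨ L.ContainsPattern ![4,1,3,2] := by
  simp only [containsPattern_132_iff, containsPattern_1324_iff, containsPattern_1342_iff,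
    containsPattern_1432_iff, containsPattern_4132_iff]
  constructor
  · rintro ⟨a, b, c, habc, hac, hcb⟩
    have hb : b ∈ L.erase M := habc.subset (by simp)
    have hbM : b < M := (hmax b (erase_subset hb)).lt_of_ne fun h => hL.not_mem_erase (h ▸ hb)
    obtain ⟨s, t, rfl⟩ := append_of_mem hM
    have hMs : M ∉ s := fun h => (nodup_append.1 hL).2.2 M h M mem_cons_self rfl
    rw [erase_append_right _ hMs, erase_cons_head, sublist_append_iff] at habc
    obtain ⟨u, v, huv, hu, hv⟩ := habc
    have hins : u ++ M :: v <+ s ++ M :: t := hu.append (hv.cons_cons M)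
    rcases u with _ | ⟨_, _ | ⟨_, _ | ⟨_, _ | ⟨_, _⟩⟩⟩⟩ <;>
      simp only [nil_append, cons_append, cons.injEq, reduceCtorEq, and_false] at huv
    · subst huv; exact Or.inr (Or.inr (Or.inr ⟨M, a, b, c, hins, hac, hcb, hbM⟩))
    · obtain ⟨rfl, rfl⟩ := huv; exact Or.inr (Or.inr (Or.inl ⟨a, M, b, c, hins, hac, hcb, hbM⟩))
    · obtain ⟨rfl, rfl, rfl⟩ := huv; exact Or.inr (Or.inl ⟨a, b, M, c, hins, hac, hcb, hbM⟩)
    · obtain ⟨rfl, rfl, rfl, rfl⟩ := huv; exact Or.inl ⟨a, b, c, M, hins, hac, hcb, hbM⟩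
  · have h132 : ∀ {a b c d}, [a, b, c] <+ L → a < c → c < b → b < d → d ∈ L →
        ∃ a b c, [a, b, c] <+ L.erase M ∧ a < c ∧ c < b := fun h hac hcb hbd hd =>
      have hbM := hbd.trans_le (hmax _ hd)
      ⟨_, _, _, h.sublist_erase_of_notMem (by simp; grind), hac, hcb⟩
    rintro (⟨a, b, c, d, h, h₁, h₂, h₃⟩ | ⟨a, b, c, d, h, h₁, h₂, h₃⟩ |
      ⟨a, b, c, d, h, h₁, h₂, h₃⟩ | ⟨a, b, c, d, h, h₁, h₂, h₃⟩)
    · exact h132 ((by simp : [a, b, c] <+ [a, b, c, d]).trans h) h₁ h₂ h₃ (h.subset (by simp))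
    · exact h132 ((by simp : [a, b, d] <+ [a, b, c, d]).trans h) h₁ h₂ h₃ (h.subset (by simp))
    · exact h132 ((by simp : [a, c, d] <+ [a, b, c, d]).trans h) h₁ h₂ h₃ (h.subset (by simp))
    · exact h132 ((by simp : [b, c, d] <+ [a, b, c, d]).trans h) h₁ h₂ h₃ (h.subset (by simp))

theorem containsPattern_132_append_cons_iff {s t : List α} {M : α} (hs : ∀ x ∈ s, x < M)
    (ht : ∀ y ∈ t, y < M) :
    (s ++ M :: t).ContainsPattern ![1,3,2] ↔
      s.ContainsPattern ![1,3,2] ∨ t.ContainsPattern ![1,3,2] ∨ ∃ x ∈ s, ∃ y ∈ t, x < y := by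
  simp only [containsPattern_132_iff]
  constructor
  · rintro ⟨a, b, c, h, hac, hcb⟩
    have hbM : b ≤ M := by
      rcases mem_append.1 (h.subset (by simp : b ∈ [a, b, c])) with hb | hb
      · exact (hs b hb).le
      · rcases mem_cons.1 hb with rfl | hb
        exacts [le_rfl, (ht b hb).le]
    have hct : c ∈ M :: t → c ∈ t := fun hc =>
      (mem_cons.1 hc).resolve_left (hcb.trans_le hbM).ne
    obtain ⟨u, v, huv, hu, hv⟩ := sublist_append_iff.1 h
    rcases u with _ | ⟨_, _ | ⟨_, _ | ⟨_, _ | ⟨_, _⟩⟩⟩⟩ <;>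
      simp only [nil_append, cons_append, cons.injEq, reduceCtorEq, and_false] at huv
    · subst huv
      rcases sublist_cons_iff.1 hv with hv | ⟨r, hr, hv⟩
      · exact Or.inr (Or.inl ⟨a, b, c, hv, hac, hcb⟩)
      · obtain ⟨rfl, rfl⟩ := cons.inj hr
        exact absurd hac (not_lt.2 (ht c (hv.subset (by simp))).le)
    · obtain ⟨rfl, rfl⟩ := huv
      exact Or.inr (Or.inr ⟨a, hu.subset (by simp), c, hct (hv.subset (by simp)), hac⟩)
    · obtain ⟨rfl, rfl, rfl⟩ := huv
      exact Or.inr (Or.inr ⟨a, hu.subset (by simp), c, hct (hv.subset (by simp)), hac⟩)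
    · obtain ⟨rfl, rfl, rfl, rfl⟩ := huv
      exact Or.inl ⟨a, b, c, hu, hac, hcb⟩
  · rintro (⟨a, b, c, h, hac, hcb⟩ | ⟨a, b, c, h, hac, hcb⟩ | ⟨x, hx, y, hy, hxy⟩)
    · exact ⟨a, b, c, h.trans (sublist_append_left _ _), hac, hcb⟩
    · exact ⟨a, b, c, h.trans ((sublist_cons_self M t).trans (sublist_append_right _ _)), hac, hcb⟩
    · exact ⟨x, M, y, (singleton_sublist.2 hx).append ((singleton_sublist.2 hy).cons_cons M),
        hxy, ht y hy⟩

theorem containsPattern_map_iff {β : Type*} [LinearOrder β] {f : α → β}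
    (hf : StrictMono f) {l : List α} {k : ℕ} {p : Fin k → ℕ} :
    (l.map f).ContainsPattern p ↔ l.ContainsPattern p := by
  constructor
  · rintro ⟨g, hg, hp⟩
    obtain ⟨l', hl', heq⟩ := sublist_map_iff.1 hg
    obtain rfl : k = l'.length := by simpa using congrArg length heq
    have hg' : g = f ∘ fun i => l'[i.1] := ofFn_injective (by rw [heq, ← map_ofFn, ofFn_getElem])
    subst hg'
    exact ⟨fun i => l'[i.1], by rwa [ofFn_getElem], by simpa [hf.lt_iff_lt] using hp⟩
  · rintro ⟨g, hg, hp⟩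
    exact ⟨f ∘ g, map_ofFn (g := f) ▸ hg.map f, by simpa [hf.lt_iff_lt] using hp⟩

end Patterns

end List

namespace Equiv.Perm

variable {n : ℕ}

def oneLine (τ : Perm (Fin n)) : List ℕ := ofFn fun i => (τ i : ℕ)

theorem nodup_oneLine (τ : Perm (Fin n)) : τ.oneLine.Nodup :=
  nodup_ofFn.2 (Fin.val_injective.comp τ.injective)

theorem mem_oneLine {τ : Perm (Fin n)} {x : ℕ} : x ∈ τ.oneLine ↔ x < n := by
  simp only [oneLine, mem_ofFn]
  exact ⟨by rintro ⟨i, rfl⟩; exact (τ i).2, fun h => ⟨τ.symm ⟨x, h⟩, by simp⟩⟩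

theorem oneLine_perm_range (τ : Perm (Fin n)) : τ.oneLine ~ range n := by
  simpa [oneLine] using τ.nodup_oneLine.perm_range fun x hx => by
    simpa [oneLine] using mem_oneLine.1 hx

theorem oneLine_injective : Function.Injective (oneLine (n := n)) := fun _ _ h =>
  Equiv.ext fun i => Fin.ext (congrFun (ofFn_injective h) i)

theorem exists_oneLine_eq {l : List ℕ} (hl : l ~ range n) : ∃ τ : Perm (Fin n), τ.oneLine = l := by
  have hlen : l.length = n := by simpa using hl.length_eq
  let f : Fin n → Fin n := fun i => ⟨l[i], by simpa using hl.subset (getElem_mem (hlen ▸ i.2))⟩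
  have hf : Function.Injective f := fun i j hij =>
    Fin.ext ((hl.nodup_iff.2 nodup_range).getElem_inj_iff.1 (Fin.val_eq_of_eq hij))
  exact ⟨Equiv.ofBijective f (Finite.injective_iff_bijective.1 hf),
    ext_getElem (by simp [oneLine, hlen]) fun i _ _ => by simp [oneLine, f]⟩

theorem card_subtype_oneLine (P : List ℕ → Prop) :
    Nat.card {τ : Perm (Fin n) // P τ.oneLine} = Nat.card {l : List ℕ // l ~ range n ∧ P l} :=
  Nat.card_congr <| Equiv.ofBijective (fun τ => ⟨τ.1.oneLine, τ.1.oneLine_perm_range, τ.2⟩)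
    ⟨fun _ _ h => Subtype.ext (oneLine_injective (congrArg Subtype.val h)), fun l =>
      let ⟨τ, hτ⟩ := exists_oneLine_eq l.2.1
      ⟨⟨τ, hτ ▸ l.2.2⟩, Subtype.ext hτ⟩⟩

end Equiv.Perm

theorem contains_iff_containsPattern_oneLine {n k : ℕ} (τ : Equiv.Perm (Fin n)) (p : Fin k → ℕ) :
    Contains τ p ↔ τ.oneLine.ContainsPattern p := by
  simp only [Contains, ContainsPattern, Equiv.Perm.oneLine, ofFn_sublist_ofFn_iff]
  constructor
  · rintro ⟨e, he, h⟩
    exact ⟨_, ⟨e, he, rfl⟩, h⟩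
  · rintro ⟨_, ⟨e, he, rfl⟩, h⟩
    exact ⟨e, he, h⟩

namespace BinaryTree

def av132Word : BinaryTree Unit → List ℕ
  | nil => []
  | node _ l r => (av132Word l).map (· + r.numNodes) ++ (l.numNodes + r.numNodes) :: av132Word r

theorem length_av132Word : ∀ t : BinaryTree Unit, t.av132Word.length = t.numNodes
  | nil => rfl
  | node _ l r => by
    simp only [av132Word, length_append, length_map, length_cons, length_av132Word l,
      length_av132Word r, numNodes]
    omega

theorem lt_numNodes_of_mem_av132Word : ∀ {t : BinaryTree Unit} {x : ℕ}, x ∈ t.av132Word →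
    x < t.numNodes
  | nil, _, h => by simp [av132Word] at h
  | node _ l r, x, h => by
    simp only [av132Word, mem_append, mem_map, mem_cons, numNodes] at h ⊢
    rcases h with ⟨y, hy, rfl⟩ | rfl | hx
    · have := lt_numNodes_of_mem_av132Word hy; omega
    · omega
    · have := lt_numNodes_of_mem_av132Word hx; omega

theorem nodup_av132Word : ∀ t : BinaryTree Unit, t.av132Word.Nodup
  | nil => nodup_nil
  | node _ l r => by
    simp only [av132Word, nodup_append, nodup_cons, mem_cons]
    refine ⟨(nodup_av132Word l).map (add_left_injective _),
      ⟨fun h => by have := lt_numNodes_of_mem_av132Word h; omega, nodup_av132Word r⟩, ?_⟩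
    rintro _ hmap y hy
    obtain ⟨x, hx, rfl⟩ := mem_map.1 hmap
    have := lt_numNodes_of_mem_av132Word hx
    rcases hy with rfl | hy
    · omega
    · have := lt_numNodes_of_mem_av132Word hy; omega

theorem av132Word_perm_range (t : BinaryTree Unit) : t.av132Word ~ range t.numNodes := by
  simpa [length_av132Word] using (nodup_av132Word t).perm_range fun x hx => by
    simpa [length_av132Word] using lt_numNodes_of_mem_av132Word hx

theorem not_containsPattern_132_av132Word :
    ∀ t : BinaryTree Unit, ¬ t.av132Word.ContainsPattern ![1,3,2]
  | nil => by simp [av132Word, containsPattern_132_iff]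
  | node _ l r => by
    have hl := @lt_numNodes_of_mem_av132Word l
    have hr := @lt_numNodes_of_mem_av132Word r
    rw [av132Word, containsPattern_132_append_cons_iff (fun x hx => by
        obtain ⟨y, hy, rfl⟩ := mem_map.1 hx; have := hl hy; omega)
      (fun y hy => by have := hr hy; omega), containsPattern_map_iff add_left_strictMono]
    rintro (h | h | ⟨_, hx, y, hy, hxy⟩)
    · exact not_containsPattern_132_av132Word l h
    · exact not_containsPattern_132_av132Word r h
    · obtain ⟨x, -, rfl⟩ := mem_map.1 hx
      have := hr hy; omega

theorem av132Word_injective : Function.Injective av132Word := by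
  intro t₁
  induction t₁ with
  | nil => rintro (_ | ⟨_, l, r⟩) h
           · rfl
           · simp [av132Word] at h
  | node _ l₁ r₁ ihl ihr =>
    rintro (_ | ⟨_, l₂, r₂⟩) h
    · simp [av132Word] at h
    have hn := congrArg length h
    simp only [av132Word, length_append, length_map, length_cons, length_av132Word] at hn
    rw [av132Word, av132Word, append_cons_inj_of_notMem
      (fun hmap => by
        obtain ⟨x, hx, hxM⟩ := mem_map.1 hmap; have := lt_numNodes_of_mem_av132Word hx; omega)
      (fun hx => by have := lt_numNodes_of_mem_av132Word hx; omega)] at h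
    obtain ⟨hl, -, hr⟩ := h
    obtain rfl := ihr hr
    rw [ihl (map_injective_iff.2 (add_left_injective _) hl)]

theorem exists_av132Word_eq (m : ℕ) {l : List ℕ} (hl : l ~ range m)
    (hav : ¬ l.ContainsPattern ![1,3,2]) : ∃ t : BinaryTree Unit, t.av132Word = l := by
  induction m using Nat.strong_induction_on generalizing l with
  | _ m ih =>
  rcases m with _ | m
  · exact ⟨nil, (perm_nil.1 hl).symm⟩
  have hmem : ∀ x, x ∈ l ↔ x < m + 1 := by simp [hl.mem_iff]
  obtain ⟨s, t, rfl⟩ := append_of_mem ((hmem m).2 m.lt_succ_self)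
  have hnd := hl.nodup_iff.2 nodup_range
  rw [nodup_append, nodup_cons] at hnd
  obtain ⟨-, ⟨hmt, -⟩, hdisj⟩ := hnd
  have hs : ∀ x ∈ s, x < m := fun x hx => lt_of_le_of_ne
    (Nat.lt_succ_iff.1 ((hmem x).1 (mem_append_left _ hx))) (hdisj x hx m mem_cons_self)
  have ht : ∀ y ∈ t, y < m := fun y hy => lt_of_le_of_ne
    (Nat.lt_succ_iff.1 ((hmem y).1 (by simp [hy]))) fun h => hmt (h ▸ hy)
  rw [containsPattern_132_append_cons_iff hs ht, not_or, not_or] at hav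
  obtain ⟨hs132, ht132, hcross⟩ := hav
  have hcross' : ∀ x ∈ s, ∀ y ∈ t, y < x := fun x hx y hy =>
    lt_of_le_of_ne (not_lt.1 fun h => hcross ⟨x, hx, y, hy, h⟩)
      fun h => hdisj x hx y (mem_cons_of_mem _ hy) h.symm
  have hst : s ++ t ~ range m := by
    simpa [range_succ, erase_append_right _ (fun h => hdisj m h m mem_cons_self rfl),
      erase_append_right _ not_mem_range_self] using hl.erase m
  obtain ⟨s', hs', rfl⟩ := left_eq_map_add_of_append_perm_range hst hcross'
  have hlen : s'.length + t.length = m := by simpa using hst.length_eq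
  obtain ⟨T₂, rfl⟩ := ih _ (by omega) (right_perm_range_of_append_perm_range hst hcross') ht132
  obtain ⟨T₁, rfl⟩ := ih _ (by rw [length_map]; omega) hs'
    ((containsPattern_map_iff add_left_strictMono).not.1 hs132)
  refine ⟨node () T₁ T₂, ?_⟩
  simp only [length_av132Word] at hlen
  simp [av132Word, length_av132Word, hlen]

theorem card_avoiding_132 (m : ℕ) :
    Nat.card {l : List ℕ // l ~ range m ∧ ¬ l.ContainsPattern ![1,3,2]} = catalan m := by
  rw [← treesOfNumNodesEq_card_eq_catalan, ← Nat.card_eq_finsetCard]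
  refine (Nat.card_congr (Equiv.ofBijective (fun t => ⟨t.1.av132Word,
    by simpa [mem_treesOfNumNodesEq.1 t.2] using t.1.av132Word_perm_range,
    t.1.not_containsPattern_132_av132Word⟩)
      ⟨fun _ _ h => Subtype.ext (av132Word_injective (congrArg Subtype.val h)), fun l => ?_⟩)).symm
  obtain ⟨t, ht⟩ := exists_av132Word_eq m l.2.1 l.2.2
  refine ⟨⟨t, mem_treesOfNumNodesEq.2 ?_⟩, Subtype.ext ht⟩
  rw [← length_av132Word, ht, l.2.1.length_eq, length_range]

end BinaryTree

theorem stmt15 (n : ℕ) (hn : 1 ≤ n) :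
    Nat.card {τ : Equiv.Perm (Fin n) //
      AvoidsPat τ ![1,3,2,4] ∧ AvoidsPat τ ![1,3,4,2] ∧
      AvoidsPat τ ![1,4,3,2] ∧ AvoidsPat τ ![4,1,3,2]} =
    Nat.choose (2 * (n - 1)) (n - 1) := by
  obtain ⟨m, rfl⟩ : ∃ m, n = m + 1 := ⟨n - 1, by omega⟩
  have avoids_iff (τ : Equiv.Perm (Fin (m + 1))) :
      (AvoidsPat τ ![1,3,2,4] ∧ AvoidsPat τ ![1,3,4,2] ∧
        AvoidsPat τ ![1,4,3,2] ∧ AvoidsPat τ ![4,1,3,2]) ↔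
      ¬ (τ.oneLine.erase m).ContainsPattern ![1,3,2] := by
    rw [containsPattern_132_erase_max_iff τ.nodup_oneLine (τ.mem_oneLine.2 m.lt_succ_self)
      fun x hx => Nat.lt_succ_iff.1 (τ.mem_oneLine.1 hx)]
    simp only [AvoidsPat, contains_iff_containsPattern_oneLine, not_or]
  rw [Nat.card_congr (Equiv.subtypeEquivRight avoids_iff),
    Equiv.Perm.card_subtype_oneLine fun l => ¬ (l.erase m).ContainsPattern ![1,3,2],
    card_perm_range_succ_erase m fun l => ¬ l.ContainsPattern ![1,3,2],
    BinaryTree.card_avoiding_132, succ_mul_catalan_eq_centralBinom, Nat.centralBinom,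
    Nat.add_sub_cancel]
end

section
/- For every n ≥ 1, the set of permutations of length n avoiding 1324, 1342, 1432 and 4132 is in bijection with pairs (σ, p) where σ is a 132-avoiding permutation of length n-1 and p ∈ {1, ..., n} is an insertion position for the element n. -/
namespace Stmt17Aux

variable {m : ℕ}

/-- Insert the new maximum value at position `p` in `σ`. -/
def ins (σ : Equiv.Perm (Fin m)) (p : Fin (m+1)) : Equiv.Perm (Fin (m+1)) :=
  (finSuccEquiv' p).trans ((Equiv.optionCongr σ).trans (finSuccEquiv' (Fin.last m)).symm)

lemma ins_self (σ : Equiv.Perm (Fin m)) (p : Fin (m+1)) : ins σ p p = Fin.last m := by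
  simp [ins]

lemma ins_succAbove (σ : Equiv.Perm (Fin m)) (p : Fin (m+1)) (j : Fin m) :
    ins σ p (p.succAbove j) = (σ j).castSucc := by
  simp [ins, finSuccEquiv'_succAbove, finSuccEquiv'_symm_some, Fin.succAbove_last]

/-- If `ins σ p` contains a 4-pattern `q` whose maximum sits at index `j` and whose
deletion at `j` is order-isomorphic to 132, then `σ` contains 132. -/
lemma fwd (σ : Equiv.Perm (Fin m)) (p : Fin (m+1)) (q : Fin 4 → ℕ) (j : Fin 4)
    (hmax : ∀ a, a ≠ j → q a < q j)
    (hdel : ∀ a b : Fin 3, ![1,3,2] a < ![1,3,2] b ↔ q (j.succAbove a) < q (j.succAbove b))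
    (h : Contains (ins σ p) q) : Contains σ ![1,3,2] := by
  obtain ⟨f, hf, hq⟩ := h
  by_cases hp : ∃ a, f a = p
  · obtain ⟨a, ha⟩ := hp
    have haj : a = j := by
      by_contra hne
      have h1 : q a < q j := hmax a hne
      have h2 : q j < q a := by
        rw [hq]
        rw [ha, ins_self]
        have : f j ≠ p := fun h => hne (hf.injective (h.trans ha.symm)).symm
        obtain ⟨k, hk⟩ := Fin.exists_succAbove_eq this
        rw [← hk, ins_succAbove]
        exact Fin.castSucc_lt_last _
      omega
    symm at haj; subst haj
    have hne : ∀ i : Fin 3, f (j.succAbove i) ≠ p := by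
      intro i h
      exact (Fin.succAbove_ne j i) (hf.injective (h.trans ha.symm))
    choose k hk using fun i => Fin.exists_succAbove_eq (hne i)
    refine ⟨k, ?_, ?_⟩
    · intro x y hxy
      have : p.succAbove (k x) < p.succAbove (k y) := by
        rw [hk, hk]; exact hf ((Fin.succAbove_lt_succAbove_iff).mpr hxy)
      exact (Fin.succAbove_lt_succAbove_iff).mp this
    · intro x y
      rw [hdel, hq, ← hk, ← hk, ins_succAbove, ins_succAbove, Fin.castSucc_lt_castSucc_iff]
  · push_neg at hp
    choose k hk using fun a => Fin.exists_succAbove_eq (hp a)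
    refine ⟨fun i => k (j.succAbove i), ?_, ?_⟩
    · intro x y hxy
      have : p.succAbove (k (j.succAbove x)) < p.succAbove (k (j.succAbove y)) := by
        rw [hk, hk]; exact hf ((Fin.succAbove_lt_succAbove_iff).mpr hxy)
      exact (Fin.succAbove_lt_succAbove_iff).mp this
    · intro x y
      rw [hdel, hq, ← hk, ← hk, ins_succAbove, ins_succAbove, Fin.castSucc_lt_castSucc_iff]

lemma sm4 {α} [Preorder α] {a b c d : α} (h1 : a < b) (h2 : b < c) (h3 : c < d) :
    StrictMono ![a,b,c,d] := by
  intro i j hij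
  fin_cases i <;> fin_cases j <;>
    first
      | exact absurd hij (by decide)
      | exact h1 | exact h2 | exact h3
      | exact h1.trans h2 | exact h2.trans h3
      | exact (h1.trans h2).trans h3

set_option maxRecDepth 100000 in
lemma bwd (σ : Equiv.Perm (Fin m)) (p : Fin (m+1)) (h : Contains σ ![1,3,2]) :
    Contains (ins σ p) ![1,3,2,4] ∨ Contains (ins σ p) ![1,3,4,2] ∨
    Contains (ins σ p) ![1,4,3,2] ∨ Contains (ins σ p) ![4,1,3,2] := by
  obtain ⟨f, hf, h132⟩ := h
  have A : σ (f 0) < σ (f 2) := (h132 0 2).mp (by decide)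
  have B : σ (f 2) < σ (f 1) := (h132 2 1).mp (by decide)
  have AB : σ (f 0) < σ (f 1) := A.trans B
  have notA : ¬ σ (f 2) < σ (f 0) := lt_asymm A
  have notB : ¬ σ (f 1) < σ (f 2) := lt_asymm B
  have notAB : ¬ σ (f 1) < σ (f 0) := lt_asymm AB
  have notL : ∀ x : Fin m, ¬ (Fin.last m < x.castSucc) :=
    fun x => not_lt.mpr (Fin.castSucc_lt_last x).le
  have g01 : p.succAbove (f 0) < p.succAbove (f 1) :=
    Fin.succAbove_lt_succAbove_iff.mpr (hf (by decide))
  have g12 : p.succAbove (f 1) < p.succAbove (f 2) :=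
    Fin.succAbove_lt_succAbove_iff.mpr (hf (by decide))
  have n0 : p ≠ p.succAbove (f 0) := (Fin.succAbove_ne p (f 0)).symm
  have n1 : p ≠ p.succAbove (f 1) := (Fin.succAbove_ne p (f 1)).symm
  have n2 : p ≠ p.succAbove (f 2) := (Fin.succAbove_ne p (f 2)).symm
  rcases lt_or_gt_of_ne n0 with hp0 | hp0
  · refine Or.inr (Or.inr (Or.inr ⟨![p, p.succAbove (f 0), p.succAbove (f 1), p.succAbove (f 2)],
      sm4 hp0 g01 g12, ?_⟩))
    intro i k
    fin_cases i <;> fin_cases k <;>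
      simp [ins_self, ins_succAbove, Fin.castSucc_lt_castSucc_iff, Fin.castSucc_lt_last,
        A, B, AB, notA, notB, notAB, notL]
  rcases lt_or_gt_of_ne n1 with hp1 | hp1
  · refine Or.inr (Or.inr (Or.inl ⟨![p.succAbove (f 0), p, p.succAbove (f 1), p.succAbove (f 2)],
      sm4 hp0 hp1 g12, ?_⟩))
    intro i k
    fin_cases i <;> fin_cases k <;>
      simp [ins_self, ins_succAbove, Fin.castSucc_lt_castSucc_iff, Fin.castSucc_lt_last,
        A, B, AB, notA, notB, notAB, notL]
  rcases lt_or_gt_of_ne n2 with hp2 | hp2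
  · refine Or.inr (Or.inl ⟨![p.succAbove (f 0), p.succAbove (f 1), p, p.succAbove (f 2)],
      sm4 g01 hp1 hp2, ?_⟩)
    intro i k
    fin_cases i <;> fin_cases k <;>
      simp [ins_self, ins_succAbove, Fin.castSucc_lt_castSucc_iff, Fin.castSucc_lt_last,
        A, B, AB, notA, notB, notAB, notL]
  · refine Or.inl ⟨![p.succAbove (f 0), p.succAbove (f 1), p.succAbove (f 2), p],
      sm4 g01 g12 hp2, ?_⟩
    intro i k
    fin_cases i <;> fin_cases k <;>
      simp [ins_self, ins_succAbove, Fin.castSucc_lt_castSucc_iff, Fin.castSucc_lt_last,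
        A, B, AB, notA, notB, notAB, notL]

lemma key (σ : Equiv.Perm (Fin m)) (p : Fin (m+1)) :
    (Contains (ins σ p) ![1,3,2,4] ∨ Contains (ins σ p) ![1,3,4,2] ∨
     Contains (ins σ p) ![1,4,3,2] ∨ Contains (ins σ p) ![4,1,3,2]) ↔
    Contains σ ![1,3,2] := by
  constructor
  · rintro (h | h | h | h)
    · exact fwd σ p _ 3 (by decide) (by decide) h
    · exact fwd σ p _ 2 (by decide) (by decide) h
    · exact fwd σ p _ 1 (by decide) (by decide) h
    · exact fwd σ p _ 0 (by decide) (by decide) h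
  · exact bwd σ p

lemma ins_injective :
    Function.Injective (fun x : Equiv.Perm (Fin m) × Fin (m+1) => ins x.1 x.2) := by
  rintro ⟨σ, p⟩ ⟨σ', p'⟩ h
  simp only at h
  have hpp : p = p' := by
    by_contra hne
    obtain ⟨j, hj⟩ := Fin.exists_succAbove_eq hne
    have h1 : ins σ p p = Fin.last m := ins_self σ p
    have h2 : ins σ' p' p = (σ' j).castSucc := by rw [← hj, ins_succAbove]
    rw [h, h2] at h1
    exact (Fin.castSucc_lt_last (σ' j)).ne h1
  subst hpp
  have hσ : σ = σ' := by
    apply Equiv.ext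
    intro j
    have := congrArg (fun e : Equiv.Perm (Fin (m+1)) => e (p.succAbove j)) h
    simp only [ins_succAbove] at this
    exact Fin.castSucc_injective m this
  rw [hσ]

/-- Insertion as an equivalence. -/
noncomputable def E : Equiv.Perm (Fin m) × Fin (m+1) ≃ Equiv.Perm (Fin (m+1)) :=
  Equiv.ofBijective (fun x => ins x.1 x.2)
    ((Fintype.bijective_iff_injective_and_card _).mpr
      ⟨ins_injective, by simp [Fintype.card_perm, Nat.factorial_succ]; ring⟩)

end Stmt17Aux

theorem stmt17 (n : ℕ) (hn : 1 ≤ n) :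
    Nonempty (
      {τ : Equiv.Perm (Fin n) //
        AvoidsPat τ ![1,3,2,4] ∧ AvoidsPat τ ![1,3,4,2] ∧
        AvoidsPat τ ![1,4,3,2] ∧ AvoidsPat τ ![4,1,3,2]} ≃
      {σ : Equiv.Perm (Fin (n - 1)) // AvoidsPat σ ![1,3,2]} × Fin n) := by
  obtain ⟨m, rfl⟩ : ∃ m, n = m + 1 := ⟨n - 1, by omega⟩
  constructor
  have e1 : {x : Equiv.Perm (Fin m) × Fin (m+1) // AvoidsPat x.1 ![1,3,2]} ≃
      {τ : Equiv.Perm (Fin (m+1)) //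
        AvoidsPat τ ![1,3,2,4] ∧ AvoidsPat τ ![1,3,4,2] ∧
        AvoidsPat τ ![1,4,3,2] ∧ AvoidsPat τ ![4,1,3,2]} := by
    refine Stmt17Aux.E.subtypeEquiv fun x => ?_
    have hE : Stmt17Aux.E x = Stmt17Aux.ins x.1 x.2 := rfl
    rw [hE]
    unfold AvoidsPat
    rw [← Stmt17Aux.key x.1 x.2]
    tauto
  have e2 : {x : Equiv.Perm (Fin m) × Fin (m+1) // AvoidsPat x.1 ![1,3,2]} ≃
      {σ : Equiv.Perm (Fin m) // AvoidsPat σ ![1,3,2]} × Fin (m+1) :=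
    Equiv.prodSubtypeFstEquivSubtypeProd (p := fun σ => AvoidsPat σ ![1,3,2])
  exact e1.symm.trans e2
end
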